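/- arXiv:2407.12372 — 8 statements merged into one kernel-verified Lean document; each statement's English description precedes it below -/
import Mathlib

section
/- Let f : ℝⁿ → ℝ ∪ {+∞} be a proper lower semicontinuous function whose domain dom(f) := {x ∈ ℝⁿ : f(x) ∈ ℝ} is closed. Then there exist C^∞ (infinitely differentiable) functions P, Q : ℝⁿ × ℝ³ → ℝ such that the optimistic value function φ_o of the bilevel problem with upper level P, lower level Q, and unconstrained lower-level feasible set 𝒴 = ℝ³ satisfies φ_o = f (where f is viewed as taking values in ℝ ∪ {±∞} and never takes the value −∞). -/
open Set

noncomputable section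

/-- The lower-level argmin set `Θ(x) = {y ∈ 𝒴 : ∀ y' ∈ 𝒴, Q(x,y) ≤ Q(x,y')}`. -/
def argminSet {n m : ℕ} (Q : (Fin n → ℝ) → (Fin m → ℝ) → ℝ) (Y : Set (Fin m → ℝ))
    (x : Fin n → ℝ) : Set (Fin m → ℝ) :=
  {y | y ∈ Y ∧ ∀ y' ∈ Y, Q x y ≤ Q x y'}

/-- Optimistic value function `φ_o(x) = inf_{y ∈ Θ(x)} P(x,y)`,
with the convention `inf ∅ = +∞`. -/
def valOpt {n m : ℕ} (P Q : (Fin n → ℝ) → (Fin m → ℝ) → ℝ) (Y : Set (Fin m → ℝ))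
    (x : Fin n → ℝ) : EReal :=
  ⨅ y ∈ argminSet Q Y x, ((P x y : ℝ) : EReal)

/-- Pessimistic value function `φ_p(x) = sup_{y ∈ Θ(x)} P(x,y)`,
with the convention `sup ∅ = -∞`. -/
def valPess {n m : ℕ} (P Q : (Fin n → ℝ) → (Fin m → ℝ) → ℝ) (Y : Set (Fin m → ℝ))
    (x : Fin n → ℝ) : EReal :=
  ⨆ y ∈ argminSet Q Y x, ((P x y : ℝ) : EReal)

/-- `P (x, y)` is a real polynomial in the joint variables `(x, y)`. -/
def IsPolyMap {n m : ℕ} (P : (Fin n → ℝ) → (Fin m → ℝ) → ℝ) : Prop :=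
  ∃ p : MvPolynomial (Fin n ⊕ Fin m) ℝ,
    ∀ x y, P x y = MvPolynomial.eval (Sum.elim x y) p

/-- Basic semi-algebraic subset of `ℝ^ι`. -/
def IsBasicSemialgebraic {ι : Type} [Fintype ι] (S : Set (ι → ℝ)) : Prop :=
  ∃ (p : MvPolynomial ι ℝ) (k : ℕ) (q : Fin k → MvPolynomial ι ℝ),
    S = {x | MvPolynomial.eval x p = 0 ∧ ∀ j, 0 < MvPolynomial.eval x (q j)}

/-- Semi-algebraic set: a finite union of basic semi-algebraic sets. -/
def IsSemialgebraic {ι : Type} [Fintype ι] (S : Set (ι → ℝ)) : Prop :=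
  ∃ (N : ℕ) (T : Fin N → Set (ι → ℝ)),
    (∀ i, IsBasicSemialgebraic (T i)) ∧ S = ⋃ i, T i

/-- Semi-algebraic real-valued function: its graph (inside `ℝ^{ι} × ℝ ≅ ℝ^{ι ⊕ Unit}`)
is semi-algebraic. -/
def IsSemialgebraicFun {ι : Type} [Fintype ι] (f : (ι → ℝ) → ℝ) : Prop :=
  IsSemialgebraic {z : (ι ⊕ Unit) → ℝ | f (z ∘ Sum.inl) = z (Sum.inr ())}

/-- Extended-real-valued semi-algebraic function: the sets where it is finite, `+∞`, `-∞`
are semi-algebraic, and the graph of its restriction to its (finite) domain is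
semi-algebraic. -/
def IsERealSemialgebraicFun {ι : Type} [Fintype ι] (h : (ι → ℝ) → EReal) : Prop :=
  IsSemialgebraic {x | ∃ r : ℝ, h x = (r : EReal)} ∧
  IsSemialgebraic {x | h x = ⊤} ∧
  IsSemialgebraic {x | h x = ⊥} ∧
  IsSemialgebraic {z : (ι ⊕ Unit) → ℝ | h (z ∘ Sum.inl) = ((z (Sum.inr ()) : ℝ) : EReal)}

/-- A (possibly unbounded) box `[a₁,b₁] × ⋯ × [aₘ,bₘ]` in `ℝ^m`, with
endpoints in `ℝ ∪ {±∞}`. -/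
def IsBox {m : ℕ} (Y : Set (Fin m → ℝ)) : Prop :=
  ∃ a b : Fin m → EReal,
    Y = {y | ∀ i, a i ≤ (y i : EReal) ∧ (y i : EReal) ≤ b i}

/-- The bounded box `[a₁,b₁] × ⋯ × [aₘ,bₘ]` with real endpoints. -/
def boundedBox {m : ℕ} (a b : Fin m → ℝ) : Set (Fin m → ℝ) :=
  {y | ∀ i, y i ∈ Set.Icc (a i) (b i)}

/-- Piecewise polynomial function: there is a finite partition of `ℝ^n` into pairwise
disjoint semi-algebraic sets on each of which `f` coincides with a polynomial. -/
def IsPiecewisePolynomial {n : ℕ} (f : (Fin n → ℝ) → ℝ) : Prop :=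
  ∃ (N : ℕ) (S : Fin N → Set (Fin n → ℝ)) (p : Fin N → MvPolynomial (Fin n) ℝ),
    (∀ i, IsSemialgebraic (S i)) ∧
    (∀ i j, i ≠ j → Disjoint (S i) (S j)) ∧
    (⋃ i, S i) = Set.univ ∧
    (∀ i, ∀ x ∈ S i, f x = MvPolynomial.eval x (p i))

/-!
The lower level `Q(x, y) = g(x, y₀) · exp y₁`, where `g ≥ 0` is a smooth function vanishing exactly
on the epigraph of `f` (closed by lower semicontinuity), has as minimizers exactly the `y` with
`f x ≤ y₀`: where `g(x, y₀) > 0`, decreasing `y₁` strictly decreases `Q`, so the minimum value is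
`0` when attained and otherwise there is no minimizer at all. With `P(x, y) = y₀` the optimistic
value is then `inf {y₀ : f x ≤ y₀} = f x`, also when `f x = +∞` and there is no minimizer.
-/

theorem LowerSemicontinuous.isClosed_realEpigraph {α : Type*} [TopologicalSpace α]
    {f : α → EReal} (hf : LowerSemicontinuous f) :
    IsClosed {p : α × ℝ | f p.1 ≤ p.2} :=
  hf.isClosed_epigraph.preimage
    (continuous_fst.prodMk (continuous_coe_real_ereal.comp continuous_snd))

theorem IsClosed.exists_contDiff_nonneg_zero_iff {E : Type*} [NormedAddCommGroup E]
    [NormedSpace ℝ E] [FiniteDimensional ℝ E] {s : Set E} (hs : IsClosed s) (n : ℕ∞) :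
    ∃ g : E → ℝ, ContDiff ℝ n g ∧ (∀ p, 0 ≤ g p) ∧ ∀ p, g p = 0 ↔ p ∈ s := by
  obtain ⟨g, hg_supp, hg_smooth, hg_range⟩ := hs.isOpen_compl.exists_contDiff_support_eq (n := n)
  refine ⟨g, hg_smooth, fun p => (hg_range ⟨p, rfl⟩).1, fun p => ?_⟩
  rw [← Function.notMem_support, hg_supp, notMem_compl_iff]

theorem forall_mul_exp_le_iff {ι : Type*} [DecidableEq ι] {h : ℝ → ℝ} (h_nonneg : ∀ t, 0 ≤ h t)
    {i j : ι} (hij : i ≠ j) (y : ι → ℝ) :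
    (∀ y' : ι → ℝ, h (y i) * Real.exp (y j) ≤ h (y' i) * Real.exp (y' j)) ↔ h (y i) = 0 := by
  refine ⟨fun hmin => ?_, fun hy y' => ?_⟩
  · by_contra hy
    have hpos : 0 < h (y i) := (h_nonneg _).lt_of_ne' hy
    have hle := hmin (Function.update y j (y j - 1))
    rw [Function.update_self, Function.update_of_ne hij] at hle
    have := (mul_le_mul_iff_right₀ hpos).1 hle
    rw [Real.exp_le_exp] at this
    linarith
  · rw [hy, zero_mul]
    exact mul_nonneg (h_nonneg _) (Real.exp_pos _).le

theorem EReal.biInf_coe_apply_ge_eq {ι : Type*} (i : ι) (a : EReal) :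
    ⨅ y ∈ {y : ι → ℝ | a ≤ y i}, ((y i : ℝ) : EReal) = a := by
  refine le_antisymm (le_of_forall_gt fun b hab => ?_) (le_iInf₂ fun y hy => hy)
  obtain ⟨t, hat, htb⟩ := EReal.lt_iff_exists_real_btwn.1 hab
  exact (iInf₂_le (fun _ => t) hat.le).trans_lt htb

theorem smooth_bilevel_represents_lsc_general (n : ℕ) (f : (Fin n → ℝ) → EReal)
    (hlsc : LowerSemicontinuous f) :
    ∃ P Q : (Fin n → ℝ) → (Fin 3 → ℝ) → ℝ,
      ContDiff ℝ (⊤ : ℕ∞) (Function.uncurry P) ∧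
      ContDiff ℝ (⊤ : ℕ∞) (Function.uncurry Q) ∧
      ∀ x, valOpt P Q Set.univ x = f x := by
  obtain ⟨g, hg_smooth, hg_nonneg, hg_zero⟩ :=
    hlsc.isClosed_realEpigraph.exists_contDiff_nonneg_zero_iff ⊤
  refine ⟨fun _ y => y 0, fun x y => g (x, y 0) * Real.exp (y 1), by fun_prop, by fun_prop,
    fun x => ?_⟩
  have h_argmin : argminSet (fun x y => g (x, y 0) * Real.exp (y 1)) univ x =
      {y : Fin 3 → ℝ | f x ≤ y 0} := by
    ext y
    simpa [argminSet] using
      (forall_mul_exp_le_iff (h := fun t => g (x, t)) (fun _ => hg_nonneg _) (by decide) y).trans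
        (hg_zero (x, y 0))
  rw [valOpt, h_argmin, EReal.biInf_coe_apply_ge_eq]

/-- Any proper lower semicontinuous `f : ℝⁿ → ℝ ∪ {+∞}` with closed domain is
the optimistic value function of a `C^∞` bilevel problem with 3 unconstrained lower-level
variables. -/
theorem smooth_bilevel_represents_lsc (n : ℕ) (f : (Fin n → ℝ) → EReal)
    (hne_bot : ∀ x, f x ≠ ⊥)
    (hproper : ∃ x, f x ≠ ⊤)
    (hlsc : LowerSemicontinuous f)
    (hdom : IsClosed {x | ∃ r : ℝ, f x = (r : EReal)}) :
    ∃ P Q : (Fin n → ℝ) → (Fin 3 → ℝ) → ℝ,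
      ContDiff ℝ (⊤ : ℕ∞) (Function.uncurry P) ∧
      ContDiff ℝ (⊤ : ℕ∞) (Function.uncurry Q) ∧
      ∀ x, valOpt P Q Set.univ x = f x :=
  smooth_bilevel_represents_lsc_general n f hlsc
end
end

section
/- Let f : ℝⁿ → ℝ ∪ {−∞} be a proper upper semicontinuous function whose domain dom(f) := {x ∈ ℝⁿ : f(x) ∈ ℝ} is closed. Then there exist C^∞ (infinitely differentiable) functions P, Q : ℝⁿ × ℝ³ → ℝ such that the pessimistic value function φ_p of the bilevel problem with upper level P, lower level Q, and unconstrained lower-level feasible set 𝒴 = ℝ³ satisfies φ_p = f (where f is viewed as taking values in ℝ ∪ {±∞} and never takes the value +∞). -/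
/-!
An upper semicontinuous `f` has a closed hypograph `{(x, t) | t ≤ f x}`, so the hypograph is the
zero set of a smooth `g`. Take `P (x, y) = y₀` and `Q (x, y) = g (x, y₀)² · exp y₁`. Shifting `y₁`
down strictly decreases `Q` wherever `g ≠ 0`, so the lower-level solutions are exactly the `y`
with `y₀ ≤ f x`, and the supremum of `y₀` over them is `f x`.
-/

open Set

noncomputable section

open Real

theorem UpperSemicontinuous.isClosed_hypograph_real {α : Type*} [TopologicalSpace α]
    {f : α → EReal} (hf : UpperSemicontinuous f) :
    IsClosed {p : α × ℝ | (p.2 : EReal) ≤ f p.1} :=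
  (upperSemicontinuous_iff_IsClosed_hypograph.mp hf).preimage
    (continuous_fst.prodMk (continuous_coe_real_ereal.comp continuous_snd))

theorem EReal.iSup_coe_le_eq (a : EReal) : ⨆ (t : ℝ) (_ : (t : EReal) ≤ a), (t : EReal) = a :=
  le_antisymm (iSup₂_le fun _ ht => ht)
    (EReal.ge_of_forall_gt_iff_ge.mp fun t ht => le_iSup₂_of_le t ht.le le_rfl)

theorem mem_argminSet_univ_iff_eq_zero {n m : ℕ} {Q : (Fin n → ℝ) → (Fin m → ℝ) → ℝ}
    {x : Fin n → ℝ} (hnonneg : ∀ y, 0 ≤ Q x y)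
    (hdescent : ∀ y, Q x y ≠ 0 → ∃ y', Q x y' < Q x y) (y : Fin m → ℝ) :
    y ∈ argminSet Q univ x ↔ Q x y = 0 := by
  refine ⟨fun ⟨_, hmin⟩ => ?_, fun hy => ⟨mem_univ y, fun y' _ => hy ▸ hnonneg y'⟩⟩
  by_contra hy
  obtain ⟨y', hy'⟩ := hdescent y hy
  exact (hmin y' (mem_univ y')).not_gt hy'

theorem argminSet_sq_mul_exp {n m : ℕ} {i j : Fin m} (hij : i ≠ j)
    (g : (Fin n → ℝ) → ℝ → ℝ) (x : Fin n → ℝ) :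
    argminSet (fun x y => g x (y i) ^ 2 * exp (y j)) univ x = {y | g x (y i) = 0} := by
  ext y
  refine (mem_argminSet_univ_iff_eq_zero (fun y => by positivity) (fun y hy => ?_) y).trans ?_
  · refine ⟨Function.update y j (y j - 1), ?_⟩
    have hpos : 0 < g x (y i) ^ 2 := by
      simpa [sq_pos_iff] using left_ne_zero_of_mul hy
    simp only [Function.update_self, Function.update_of_ne hij]
    gcongr
    linarith
  · simp [exp_ne_zero]

theorem smooth_bilevel_represents_usc_general (n : ℕ) (f : (Fin n → ℝ) → EReal)
    (husc : UpperSemicontinuous f) :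
    ∃ P Q : (Fin n → ℝ) → (Fin 3 → ℝ) → ℝ,
      ContDiff ℝ (⊤ : ℕ∞) (Function.uncurry P) ∧
      ContDiff ℝ (⊤ : ℕ∞) (Function.uncurry Q) ∧
      ∀ x, valPess P Q Set.univ x = f x := by
  obtain ⟨g, hg_support, hg_smooth, -⟩ :=
    husc.isClosed_hypograph_real.isOpen_compl.exists_contDiff_support_eq (n := ⊤)
  have hg_zero : ∀ x t, g (x, t) = 0 ↔ (t : EReal) ≤ f x := fun x t => by
    rw [← Function.notMem_support, hg_support]
    simp
  refine ⟨fun _ y => y 0, fun x y => g (x, y 0) ^ 2 * exp (y 1), by fun_prop, by fun_prop,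
    fun x => ?_⟩
  have hargmin : argminSet (fun x y => g (x, y 0) ^ 2 * exp (y 1)) univ x =
      (fun y : Fin 3 → ℝ => y 0) ⁻¹' {t | (t : EReal) ≤ f x} := by
    rw [argminSet_sq_mul_exp (by decide) fun x t => g (x, t)]
    exact ext fun y => hg_zero x (y 0)
  rw [valPess, hargmin, ← iSup_image, image_preimage_eq _ (Function.surjective_eval 0)]
  exact EReal.iSup_coe_le_eq (f x)

/-- Any proper upper semicontinuous `f : ℝⁿ → ℝ ∪ {-∞}` with closed domain is
the pessimistic value function of a `C^∞` bilevel problem with 3 unconstrained lower-level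
variables. -/
theorem smooth_bilevel_represents_usc (n : ℕ) (f : (Fin n → ℝ) → EReal)
    (hne_top : ∀ x, f x ≠ ⊤)
    (hproper : ∃ x, f x ≠ ⊥)
    (husc : UpperSemicontinuous f)
    (hdom : IsClosed {x | ∃ r : ℝ, f x = (r : EReal)}) :
    ∃ P Q : (Fin n → ℝ) → (Fin 3 → ℝ) → ℝ,
      ContDiff ℝ (⊤ : ℕ∞) (Function.uncurry P) ∧
      ContDiff ℝ (⊤ : ℕ∞) (Function.uncurry Q) ∧
      ∀ x, valPess P Q Set.univ x = f x :=
  smooth_bilevel_represents_usc_general n f husc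
end
end

section
/- Let P, Q : ℝⁿ × ℝᵐ → ℝ be continuous functions and let 𝒴 ⊆ ℝᵐ be a nonempty compact set. Then the optimistic value function φ_o : ℝⁿ → ℝ, φ_o(x) = min_{y ∈ Θ(x)} P(x,y), is real-valued and lower semicontinuous on ℝⁿ. -/
open Set

noncomputable section

/-!
At each `x` the lower-level problem has a nonempty compact solution set `Θ(x)`, so the infimum
of `P x` over it is attained and finite. The graph `{(x, y) | y ∈ Θ(x)}` is closed and lies in
`ℝⁿ × 𝒴`; hence every sublevel set `{x | φ_o(x) ≤ c}` is the projection of a closed subset of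
`ℝⁿ × 𝒴`, and projections along a compact factor are closed maps.
-/

section Marginal

variable {X Y : Type*} [TopologicalSpace X] [TopologicalSpace Y]

theorem IsCompact.isClosed_image_fst {K : Set Y} (hK : IsCompact K) {s : Set (X × Y)}
    (hs : IsClosed s) (hsK : s ⊆ univ ×ˢ K) : IsClosed (Prod.fst '' s) := by
  have : CompactSpace K := isCompact_iff_compactSpace.mp hK
  let e : X × K → X × Y := Prod.map id Subtype.val
  have hs_eq : Prod.fst '' s = Prod.fst '' (e ⁻¹' s) := by
    ext x
    constructor
    · rintro ⟨⟨x, y⟩, hxy, rfl⟩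
      exact ⟨(x, ⟨y, (hsK hxy).2⟩), hxy, rfl⟩
    · rintro ⟨⟨x, y⟩, hxy, rfl⟩
      exact ⟨e (x, y), hxy, rfl⟩
  rw [hs_eq]
  exact isClosedMap_fst_of_compactSpace _
    (hs.preimage (continuous_id.prodMap continuous_subtype_val))

theorem isClosed_setOf_isMinOn {Q : X → Y → ℝ} (hQ : Continuous (Function.uncurry Q))
    (K : Set Y) :
    IsClosed {p : X × Y | IsMinOn (Q p.1) K p.2} := by
  simp only [isMinOn_iff, ofPred_forall]
  exact isClosed_biInter fun y _ =>
    isClosed_le hQ (hQ.comp (continuous_fst.prodMk continuous_const))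

variable {S : Set (X × Y)} {K : Set Y} {P : X → Y → ℝ}

theorem IsClosed.isCompact_fiber (hS : IsClosed S) (hK : IsCompact K) (hSK : S ⊆ univ ×ˢ K)
    (x : X) : IsCompact {y | (x, y) ∈ S} :=
  hK.of_isClosed_subset (hS.preimage (Continuous.prodMk_right x)) fun _ hy => (hSK hy).2

theorem IsClosed.exists_iInf_fiber_eq (hS : IsClosed S) (hK : IsCompact K) (hSK : S ⊆ univ ×ˢ K)
    (hP : Continuous (Function.uncurry P)) {x : X} (hx : ∃ y, (x, y) ∈ S) :
    ∃ y, (x, y) ∈ S ∧ ⨅ (y) (_ : (x, y) ∈ S), (P x y : EReal) = P x y := by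
  obtain ⟨y, hy, hmin⟩ := (hS.isCompact_fiber hK hSK x).exists_isMinOn hx
    (hP.comp (Continuous.prodMk_right x)).continuousOn
  exact ⟨y, hy, le_antisymm (iInf₂_le y hy)
    (le_iInf₂ fun y' hy' => EReal.coe_le_coe_iff.mpr (hmin hy'))⟩

/-- Berge's lower semicontinuity theorem for the marginal function of a closed-graph
multifunction with values in a fixed compact set (empty fibres give the value `⊤`). -/
theorem IsClosed.lowerSemicontinuous_iInf_fiber (hS : IsClosed S) (hK : IsCompact K)
    (hSK : S ⊆ univ ×ˢ K) (hP : Continuous (Function.uncurry P)) :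
    LowerSemicontinuous fun x => ⨅ (y) (_ : (x, y) ∈ S), (P x y : EReal) := by
  rw [lowerSemicontinuous_iff_isClosed_preimage]
  intro c
  rcases eq_or_ne c ⊤ with rfl | hc
  · simp only [Iic_top, preimage_univ, isClosed_univ]
  have hsub : (fun x => ⨅ (y) (_ : (x, y) ∈ S), (P x y : EReal)) ⁻¹' Iic c =
      Prod.fst '' (S ∩ {p | (P p.1 p.2 : EReal) ≤ c}) := by
    ext x
    constructor
    · intro hxc
      have hx : ∃ y, (x, y) ∈ S := by
        by_contra! hempty
        simp only [mem_preimage, mem_Iic, hempty, iInf_false, iInf_top, top_le_iff] at hxc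
        exact hc hxc
      obtain ⟨y, hy, heq⟩ := hS.exists_iInf_fiber_eq hK hSK hP hx
      exact ⟨(x, y), ⟨hy, show (P x y : EReal) ≤ c from heq ▸ hxc⟩, rfl⟩
    · rintro ⟨⟨x, y⟩, ⟨hy, hyc⟩, rfl⟩
      exact (iInf₂_le y hy : _ ≤ (P x y : EReal)).trans hyc
  rw [hsub]
  exact hK.isClosed_image_fst
    (hS.inter (_root_.isClosed_le (continuous_coe_real_ereal.comp hP) continuous_const))
    (inter_subset_left.trans hSK)

end Marginal

/-- for continuous `P, Q` and nonempty compact `𝒴`, the optimistic value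
function is real-valued and lower semicontinuous. -/
theorem valOpt_real_valued_lsc (n m : ℕ)
    (P Q : (Fin n → ℝ) → (Fin m → ℝ) → ℝ)
    (hP : Continuous (Function.uncurry P)) (hQ : Continuous (Function.uncurry Q))
    (Y : Set (Fin m → ℝ)) (hYne : Y.Nonempty) (hYc : IsCompact Y) :
    (∀ x, ∃ r : ℝ, valOpt P Q Y x = (r : EReal)) ∧
    LowerSemicontinuous (valOpt P Q Y) := by
  -- the graph of `argminSet Q Y`; `valOpt P Q Y` is its marginal function by definition
  let S : Set ((Fin n → ℝ) × (Fin m → ℝ)) := {p | p.2 ∈ Y ∧ IsMinOn (Q p.1) Y p.2}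
  have hS : IsClosed S :=
    (hYc.isClosed.preimage continuous_snd).inter (isClosed_setOf_isMinOn hQ Y)
  have hSY : S ⊆ univ ×ˢ Y := fun _ hp => ⟨trivial, hp.1⟩
  have hne (x : Fin n → ℝ) : ∃ y, (x, y) ∈ S :=
    hYc.exists_isMinOn hYne (hQ.comp (Continuous.prodMk_right x)).continuousOn
  refine ⟨fun x => ?_, hS.lowerSemicontinuous_iInf_fiber hYc hSY hP⟩
  obtain ⟨y, -, hy⟩ := hS.exists_iInf_fiber_eq hYc hSY hP (hne x)
  exact ⟨P x y, hy⟩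
end
end

section
/- Let P, Q : ℝⁿ × ℝᵐ → ℝ be continuous functions and let 𝒴 ⊆ ℝᵐ be a nonempty compact set. Then the pessimistic value function φ_p : ℝⁿ → ℝ, φ_p(x) = max_{y ∈ Θ(x)} P(x,y), is real-valued and upper semicontinuous on ℝⁿ. -/
open Set

noncomputable section

/-!
The lower-level solution sets `Θ(x)` are nonempty and compact, so the supremum defining `φ_p(x)`
is a maximum. Upper semicontinuity is Berge's maximum theorem: the graph of `Θ` is closed in
`ℝⁿ × 𝒴` and `𝒴` is compact, so by the tube lemma `P < d` on `{x₀} × Θ(x₀)` persists to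
`{x} × Θ(x)` for all `x` near `x₀`.
-/

open Filter Topology Function

theorem IsMaxOn.biSup_eq {α β : Type*} [CompleteLattice α] {f : β → α} {s : Set β} {a : β}
    (ha : a ∈ s) (h : IsMaxOn f s a) : ⨆ b ∈ s, f b = f a :=
  le_antisymm (iSup₂_le fun _ hb => h hb) (le_iSup₂_of_le a ha le_rfl)

theorem IsCompact.eventually_forall_lt_of_isClosed {X Y α : Type*} [TopologicalSpace X]
    [TopologicalSpace Y] [Preorder α] {K : Set Y} (hK : IsCompact K) {S : Set (X × Y)}
    (hS : IsClosed S) {f : X × Y → α} (hf : UpperSemicontinuous f) {x₀ : X} {d : α}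
    (h : ∀ y ∈ K, (x₀, y) ∈ S → f (x₀, y) < d) :
    ∀ᶠ x in 𝓝 x₀, ∀ y ∈ K, (x, y) ∈ S → f (x, y) < d := by
  refine hK.eventually_forall_of_forall_eventually fun y hy => ?_
  by_cases hyS : (x₀, y) ∈ S
  · exact (hf _ d (h y hy hyS)).mono fun _ hz _ => hz
  · exact mem_of_superset (hS.isOpen_compl.mem_nhds hyS) fun _ hz hzS => absurd hzS hz

theorem isClosed_setOf_forall_le {X Y : Type*} [TopologicalSpace X] [TopologicalSpace Y]
    {Q : X → Y → ℝ} (hQ : Continuous (uncurry Q)) (K : Set Y) :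
    IsClosed {p : X × Y | ∀ y ∈ K, Q p.1 p.2 ≤ Q p.1 y} := by
  simp only [ofPred_forall]
  exact isClosed_biInter fun _ _ =>
    isClosed_le hQ (hQ.comp (continuous_fst.prodMk continuous_const))

section ValueFunction

variable {n m : ℕ} {P Q : (Fin n → ℝ) → (Fin m → ℝ) → ℝ} {Y : Set (Fin m → ℝ)}

theorem argminSet_nonempty {x : Fin n → ℝ} (hQ : ContinuousOn (Q x) Y) (hYne : Y.Nonempty)
    (hYc : IsCompact Y) : (argminSet Q Y x).Nonempty :=
  let ⟨y, hy, hmin⟩ := hYc.exists_isMinOn hYne hQ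
  ⟨y, hy, fun _ hy' => hmin hy'⟩

theorem isCompact_argminSet {x : Fin n → ℝ} (hQ : Continuous (Q x)) (hYc : IsCompact Y) :
    IsCompact (argminSet Q Y x) := by
  simp only [argminSet, ofPred_and, ofPred_mem_eq, ofPred_forall]
  exact hYc.inter_right (isClosed_biInter fun _ _ => isClosed_le hQ continuous_const)

theorem exists_valPess_eq_coe {x : Fin n → ℝ} (hP : Continuous (P x)) (hQ : Continuous (Q x))
    (hYne : Y.Nonempty) (hYc : IsCompact Y) :
    ∃ y ∈ argminSet Q Y x, valPess P Q Y x = (P x y : EReal) := by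
  obtain ⟨y, hy, hmax⟩ := (isCompact_argminSet hQ hYc).exists_isMaxOn
    (argminSet_nonempty hQ.continuousOn hYne hYc) hP.continuousOn
  exact ⟨y, hy, IsMaxOn.biSup_eq (f := fun y => (P x y : EReal)) hy
    fun _ hz => EReal.coe_le_coe_iff.2 (hmax hz)⟩

theorem eventually_forall_mem_argminSet_lt (hP : UpperSemicontinuous (uncurry P))
    (hQ : Continuous (uncurry Q)) (hYc : IsCompact Y) {x₀ : Fin n → ℝ} {d : ℝ}
    (h : ∀ y ∈ argminSet Q Y x₀, P x₀ y < d) :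
    ∀ᶠ x in 𝓝 x₀, ∀ y ∈ argminSet Q Y x, P x y < d :=
  (hYc.eventually_forall_lt_of_isClosed (isClosed_setOf_forall_le hQ Y) hP
    fun y hy hmin => h y ⟨hy, hmin⟩).mono fun _ hx y hy => hx y hy.1 hy.2

theorem upperSemicontinuous_valPess (hP : UpperSemicontinuous (uncurry P))
    (hQ : Continuous (uncurry Q)) (hYc : IsCompact Y) :
    UpperSemicontinuous (valPess P Q Y) := by
  intro x₀ c hc
  obtain ⟨d, hx₀d, hdc⟩ := EReal.lt_iff_exists_real_btwn.1 hc
  have hlt : ∀ y ∈ argminSet Q Y x₀, P x₀ y < d := fun y hy =>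
    EReal.coe_lt_coe_iff.1 ((le_iSup₂ (f := fun y _ => (P x₀ y : EReal)) y hy).trans_lt hx₀d)
  filter_upwards [eventually_forall_mem_argminSet_lt hP hQ hYc hlt] with x hx
  exact (iSup₂_le fun y hy => EReal.coe_le_coe_iff.2 (hx y hy).le).trans_lt hdc

end ValueFunction

/-- for continuous `P, Q` and nonempty compact `𝒴`, the pessimistic value
function is real-valued and upper semicontinuous. -/
theorem valPess_real_valued_usc (n m : ℕ)
    (P Q : (Fin n → ℝ) → (Fin m → ℝ) → ℝ)
    (hP : Continuous (Function.uncurry P)) (hQ : Continuous (Function.uncurry Q))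
    (Y : Set (Fin m → ℝ)) (hYne : Y.Nonempty) (hYc : IsCompact Y) :
    (∀ x, ∃ r : ℝ, valPess P Q Y x = (r : EReal)) ∧
    UpperSemicontinuous (valPess P Q Y) := by
  refine ⟨fun x => ?_, upperSemicontinuous_valPess hP.upperSemicontinuous hQ hYc⟩
  obtain ⟨y, -, hy⟩ :=
    exists_valPess_eq_coe (hP.uncurry_left x) (hQ.uncurry_left x) hYne hYc
  exact ⟨P x y, hy⟩
end
end

section
/- Let h : ℝⁿ → ℝ ∪ {±∞} be any extended-real-valued semi-algebraic function. Then there exist m ∈ ℕ and polynomials P, Q : ℝⁿ × ℝᵐ → ℝ such that the optimistic value function φ_o of the bilevel problem with upper level P, lower level Q, and unconstrained lower-level feasible set 𝒴 = ℝᵐ satisfies φ_o = h. Combined with the semi-algebraicity of all such value functions, the class of optimistic value functions of polynomial bilevel problems with unbounded box lower-level constraints is exactly the class of extended-real-valued semi-algebraic functions. -/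
open Set

noncomputable section

/-!
Each of the three semi-algebraic sets attached to `h` (the graph of its finite part, `{h = -∞}` and
`{h = +∞}`) is the projection of the zero set of a nonnegative polynomial: a basic set
`{p = 0, q₁ > 0, …, q_k > 0}` is cut out by `p² + ∑ⱼ (qⱼ wⱼ² - 1)²`, and a finite union by the
product of such polynomials in disjoint auxiliary variables.

Let `A(x, r, g)`, `B(x, b)`, `T(x, t)` be these polynomials and take the upper level `P = r` and the
lower level `Q = A · B · C` with `C = (s u - 1)² + s² + T(x, t) > 0`. If `h x = -∞`, some `b` has
`B(x, b) = 0`, so every `r` is lower-level optimal and `φ_o(x) = -∞`. If `h x` is finite, the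
lower-level optimal value `0` is attained exactly where `A = 0`, i.e. at `r = h x`. If `h x = +∞`,
then `A, B > 0`, while `C` has infimum `0` (take `T(x, t) = 0`, `s → 0`, `u = 1 / s`) and never
vanishes, so the lower level has no solution and `φ_o(x) = +∞`.
-/

open MvPolynomial

section OptimisticValue

variable {Y Y' : Type*}

def optValue (p q : Y → ℝ) : EReal :=
  ⨅ y ∈ {y | ∀ y', q y ≤ q y'}, (p y : EReal)

theorem valOpt_univ {n m : ℕ} (P Q : (Fin n → ℝ) → (Fin m → ℝ) → ℝ) (x : Fin n → ℝ) :
    valOpt P Q univ x = optValue (P x) (Q x) := by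
  simp [valOpt, argminSet, optValue]

theorem optValue_comp_equiv (p q : Y → ℝ) (e : Y' ≃ Y) :
    optValue (p ∘ e) (q ∘ e) = optValue p q := by
  rw [optValue, optValue, ← e.iInf_comp]
  refine iInf_congr fun y => iInf_congr_Prop ?_ fun _ => rfl
  exact e.forall_congr_right (q := fun y' => q (e y) ≤ q y')

variable {p q : Y → ℝ}

theorem optValue_eq_top (hq : ∀ y, ∃ y', q y' < q y) : optValue p q = ⊤ := by
  refine eq_top_iff.2 (le_iInf₂ fun y hy => ?_)
  obtain ⟨y', hy'⟩ := hq y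
  exact absurd (hy y') hy'.not_ge

theorem minimizer_iff_eq_zero (hq : ∀ y, 0 ≤ q y) {y₀ : Y} (hy₀ : q y₀ = 0) {y : Y} :
    (∀ y', q y ≤ q y') ↔ q y = 0 :=
  ⟨fun hy => le_antisymm (hy₀ ▸ hy y₀) (hq y), fun hy y' => hy ▸ hq y'⟩

theorem optValue_eq_bot (hq : ∀ y, 0 ≤ q y) (hp : ∀ r : ℝ, ∃ y, q y = 0 ∧ p y < r) :
    optValue p q = ⊥ := by
  refine (EReal.eq_bot_iff_forall_lt _).2 fun r => ?_
  obtain ⟨y, hy, hpy⟩ := hp r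
  calc optValue p q ≤ p y := iInf₂_le y ((minimizer_iff_eq_zero hq hy).2 hy)
    _ < r := EReal.coe_lt_coe_iff.2 hpy

theorem optValue_eq_coe (hq : ∀ y, 0 ≤ q y) {y₀ : Y} (hy₀ : q y₀ = 0) {r : ℝ}
    (hp : ∀ y, q y = 0 → p y = r) : optValue p q = r := by
  refine le_antisymm ?_ (le_iInf₂ fun y hy => ?_)
  · calc optValue p q ≤ p y₀ := iInf₂_le y₀ ((minimizer_iff_eq_zero hq hy₀).2 hy₀)
      _ = r := by rw [hp y₀ hy₀]
  · rw [hp y ((minimizer_iff_eq_zero hq hy₀).1 hy)]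

end OptimisticValue

section ProductObjective

variable {Y₁ Y₂ Y₃ : Type*}

def prodObjective (a : Y₁ → ℝ) (b : Y₂ → ℝ) (c : Y₃ → ℝ) (y : Y₁ × Y₂ × Y₃) : ℝ :=
  a y.1 * (b y.2.1 * c y.2.2)

variable {p a : Y₁ → ℝ} {b : Y₂ → ℝ} {c : Y₃ → ℝ}

theorem optValue_prod_eq_bot (ha : ∀ y₁, 0 ≤ a y₁) (hb : ∀ y₂, 0 ≤ b y₂) (hc : ∀ y₃, 0 ≤ c y₃)
    {y₂ : Y₂} (hy₂ : b y₂ = 0) (y₃ : Y₃) (hp : ∀ r : ℝ, ∃ y₁, p y₁ < r) :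
    optValue (p ∘ Prod.fst) (prodObjective a b c) = ⊥ := by
  refine optValue_eq_bot (fun y => mul_nonneg (ha _) (mul_nonneg (hb _) (hc _))) fun r => ?_
  obtain ⟨y₁, hy₁⟩ := hp r
  exact ⟨(y₁, y₂, y₃), by simp [prodObjective, hy₂], hy₁⟩

theorem optValue_prod_eq_coe (ha : ∀ y₁, 0 ≤ a y₁) (hb : ∀ y₂, 0 < b y₂) (hc : ∀ y₃, 0 < c y₃)
    {y₁ : Y₁} (hy₁ : a y₁ = 0) (y₂ : Y₂) (y₃ : Y₃) {r : ℝ} (hp : ∀ y₁, a y₁ = 0 → p y₁ = r) :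
    optValue (p ∘ Prod.fst) (prodObjective a b c) = r := by
  refine optValue_eq_coe (fun y => mul_nonneg (ha _) (mul_pos (hb _) (hc _)).le)
    (y₀ := (y₁, y₂, y₃)) (by simp [hy₁]) fun y hy => hp _ ?_
  simpa [prodObjective, (hb _).ne', (hc _).ne'] using hy

theorem optValue_prod_eq_top (ha : ∀ y₁, 0 < a y₁) (hb : ∀ y₂, 0 < b y₂)
    (hc : ∀ y₃, ∃ y₃', c y₃' < c y₃) :
    optValue (p ∘ Prod.fst) (prodObjective a b c) = ⊤ :=
  optValue_eq_top fun y => by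
    obtain ⟨y₃, hy₃⟩ := hc y.2.2
    exact ⟨(y.1, y.2.1, y₃), mul_lt_mul_of_pos_left (mul_lt_mul_of_pos_left hy₃ (hb _)) (ha _)⟩

end ProductObjective

section ZeroProjection

variable {ι κ κ' : Type*}

structure IsZeroProjection (F : MvPolynomial (ι ⊕ κ) ℝ) (S : Set (ι → ℝ)) : Prop where
  nonneg : ∀ z w, 0 ≤ eval (Sum.elim z w) F
  mem_iff : ∀ z, z ∈ S ↔ ∃ w, eval (Sum.elim z w) F = 0

def fiberMul {R : Type*} [CommSemiring R] (F₁ : MvPolynomial (ι ⊕ κ) R)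
    (F₂ : MvPolynomial (ι ⊕ κ') R) : MvPolynomial (ι ⊕ (κ ⊕ κ')) R :=
  rename (Sum.map id Sum.inl) F₁ * rename (Sum.map id Sum.inr) F₂

theorem eval_fiberMul {R : Type*} [CommSemiring R] (F₁ : MvPolynomial (ι ⊕ κ) R)
    (F₂ : MvPolynomial (ι ⊕ κ') R) (z : ι → R) (w : κ ⊕ κ' → R) :
    eval (Sum.elim z w) (fiberMul F₁ F₂) =
      eval (Sum.elim z (w ∘ Sum.inl)) F₁ * eval (Sum.elim z (w ∘ Sum.inr)) F₂ := by
  simp [fiberMul, eval_rename, Sum.elim_comp_map]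

theorem isZeroProjection_one : IsZeroProjection (1 : MvPolynomial (ι ⊕ κ) ℝ) ∅ :=
  ⟨fun _ _ => by simp, fun _ => by simp⟩

theorem IsZeroProjection.union {F₁ : MvPolynomial (ι ⊕ κ) ℝ} {F₂ : MvPolynomial (ι ⊕ κ') ℝ}
    {S T : Set (ι → ℝ)} (h₁ : IsZeroProjection F₁ S) (h₂ : IsZeroProjection F₂ T) :
    IsZeroProjection (fiberMul F₁ F₂) (S ∪ T) where
  nonneg z w := by
    rw [eval_fiberMul]
    exact mul_nonneg (h₁.nonneg _ _) (h₂.nonneg _ _)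
  mem_iff z := by
    simp only [eval_fiberMul, mul_eq_zero, mem_union, h₁.mem_iff, h₂.mem_iff]
    constructor
    · rintro (⟨w, hw⟩ | ⟨w, hw⟩)
      · exact ⟨Sum.elim w 0, Or.inl (by simpa using hw)⟩
      · exact ⟨Sum.elim 0 w, Or.inr (by simpa using hw)⟩
    · rintro ⟨w, hw | hw⟩
      exacts [Or.inl ⟨_, hw⟩, Or.inr ⟨_, hw⟩]

theorem pos_iff_exists_mul_sq_eq_one {a : ℝ} : 0 < a ↔ ∃ w : ℝ, a * w ^ 2 = 1 := by
  refine ⟨fun ha => ⟨(√a)⁻¹, ?_⟩,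
    fun ⟨w, hw⟩ => pos_of_mul_pos_left (hw ▸ one_pos) (sq_nonneg w)⟩
  rw [inv_pow, Real.sq_sqrt ha.le, mul_inv_cancel₀ ha.ne']

def basicSetPoly {k : ℕ} (p : MvPolynomial ι ℝ) (q : Fin k → MvPolynomial ι ℝ) :
    MvPolynomial (ι ⊕ Fin k) ℝ :=
  rename Sum.inl p ^ 2 + ∑ j, (rename Sum.inl (q j) * X (Sum.inr j) ^ 2 - 1) ^ 2

theorem isZeroProjection_basicSetPoly {k : ℕ} (p : MvPolynomial ι ℝ)
    (q : Fin k → MvPolynomial ι ℝ) :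
    IsZeroProjection (basicSetPoly p q) {x | eval x p = 0 ∧ ∀ j, 0 < eval x (q j)} := by
  have heval : ∀ z w, eval (Sum.elim z w) (basicSetPoly p q) =
      eval z p ^ 2 + ∑ j, (eval z (q j) * w j ^ 2 - 1) ^ 2 := by
    simp [basicSetPoly, eval_rename]
  refine ⟨fun z w => by rw [heval]; positivity, fun z => ?_⟩
  simp_rw [heval,
    add_eq_zero_iff_of_nonneg (sq_nonneg _) (Finset.sum_nonneg fun j _ => sq_nonneg _),
    Finset.sum_eq_zero_iff_of_nonneg fun j _ => sq_nonneg _]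
  simp [sub_eq_zero, pos_iff_exists_mul_sq_eq_one, Classical.skolem]

theorem IsSemialgebraic.exists_isZeroProjection {ι : Type} [Fintype ι] {S : Set (ι → ℝ)}
    (hS : IsSemialgebraic S) :
    ∃ (κ : Type) (_ : Fintype κ) (F : MvPolynomial (ι ⊕ κ) ℝ), IsZeroProjection F S := by
  obtain ⟨N, T, hT, rfl⟩ := hS
  induction N with
  | zero => exact ⟨Empty, inferInstance, 1, by simpa using isZeroProjection_one⟩
  | succ N ih =>
    obtain ⟨κ, _, F, hF⟩ := ih (fun i => T i.succ) (fun i => hT i.succ)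
    obtain ⟨p, k, q, hT₀⟩ := hT 0
    rw [iUnion_fin_add_one_eq_iUnion_succ, hT₀]
    exact ⟨_, inferInstance, _, (isZeroProjection_basicSetPoly p q).union hF⟩

end ZeroProjection

section Gap

variable {ι κ : Type*} (F : MvPolynomial (ι ⊕ κ) ℝ)

def gapPoly : MvPolynomial (ι ⊕ (κ ⊕ Fin 2)) ℝ :=
  (X (Sum.inr (Sum.inr 0)) * X (Sum.inr (Sum.inr 1)) - 1) ^ 2 + X (Sum.inr (Sum.inr 0)) ^ 2 +
    rename (Sum.map id Sum.inl) F

theorem eval_gapPoly (z : ι → ℝ) (w : κ ⊕ Fin 2 → ℝ) :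
    eval (Sum.elim z w) (gapPoly F) =
      (w (Sum.inr 0) * w (Sum.inr 1) - 1) ^ 2 + w (Sum.inr 0) ^ 2 +
        eval (Sum.elim z (w ∘ Sum.inl)) F := by
  simp [gapPoly, eval_rename, Sum.elim_comp_map]

variable {F} {z : ι → ℝ}

theorem gapPoly_pos (hF : ∀ t, 0 ≤ eval (Sum.elim z t) F) (w : κ ⊕ Fin 2 → ℝ) :
    0 < eval (Sum.elim z w) (gapPoly F) := by
  rw [eval_gapPoly]
  refine add_pos_of_pos_of_nonneg ?_ (hF _)
  by_cases hs : w (Sum.inr 0) = 0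
  · simp [hs]
  · positivity

theorem gapPoly_exists_lt (hF : ∀ t, 0 ≤ eval (Sum.elim z t) F) {t : κ → ℝ}
    (ht : eval (Sum.elim z t) F = 0) (w : κ ⊕ Fin 2 → ℝ) :
    ∃ w', eval (Sum.elim z w') (gapPoly F) < eval (Sum.elim z w) (gapPoly F) := by
  set c := eval (Sum.elim z w) (gapPoly F)
  have hc : 0 < c := gapPoly_pos hF w
  set s := √c / 2
  have hs : 0 < s := by positivity
  refine ⟨Sum.elim t ![s, s⁻¹], ?_⟩
  have hs2 : s ^ 2 = c / 4 := by rw [div_pow, Real.sq_sqrt hc.le]; norm_num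
  simp [eval_gapPoly, ht, mul_inv_cancel₀ hs.ne', hs2]
  linarith

end Gap

section Construction

variable {ι κG κB κT : Type*}

abbrev LowerVar (κG κB κT : Type*) := (Unit ⊕ κG) ⊕ (κB ⊕ (κT ⊕ Fin 2))

def upperPoly : MvPolynomial (ι ⊕ LowerVar κG κB κT) ℝ :=
  X (Sum.inr (Sum.inl (Sum.inl ())))

def lowerPoly (FG : MvPolynomial ((ι ⊕ Unit) ⊕ κG) ℝ) (FB : MvPolynomial (ι ⊕ κB) ℝ)
    (FT : MvPolynomial (ι ⊕ κT) ℝ) : MvPolynomial (ι ⊕ LowerVar κG κB κT) ℝ :=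
  fiberMul (rename (Equiv.sumAssoc ι Unit κG) FG) (fiberMul FB (gapPoly FT))

theorem optValue_lowerPoly_eq_prodObjective (FG : MvPolynomial ((ι ⊕ Unit) ⊕ κG) ℝ)
    (FB : MvPolynomial (ι ⊕ κB) ℝ) (FT : MvPolynomial (ι ⊕ κT) ℝ) (x : ι → ℝ) :
    optValue (fun y => eval (Sum.elim x y) upperPoly)
        (fun y => eval (Sum.elim x y) (lowerPoly FG FB FT)) =
      optValue ((fun y₁ => y₁ (Sum.inl ())) ∘ Prod.fst)
        (prodObjective (fun y₁ => eval (Sum.elim (Sum.elim x (y₁ ∘ Sum.inl)) (y₁ ∘ Sum.inr)) FG)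
          (fun y₂ => eval (Sum.elim x y₂) FB) (fun y₃ => eval (Sum.elim x y₃) (gapPoly FT))) := by
  rw [← optValue_comp_equiv _ _ ((Equiv.sumArrowEquivProdArrow _ _ ℝ).trans
    ((Equiv.refl _).prodCongr (Equiv.sumArrowEquivProdArrow _ _ ℝ)))]
  congr 1 <;> funext y
  · simp [upperPoly]
  · have hassoc : Sum.elim x (y ∘ Sum.inl) ∘ Equiv.sumAssoc ι Unit κG =
        Sum.elim (Sum.elim x (y ∘ Sum.inl ∘ Sum.inl)) (y ∘ Sum.inl ∘ Sum.inr) := by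
      ext ((_ | _) | _) <;> rfl
    simp only [lowerPoly, eval_fiberMul, eval_rename, hassoc]
    rfl

theorem optValue_lowerPoly {h : (ι → ℝ) → EReal} {FG : MvPolynomial ((ι ⊕ Unit) ⊕ κG) ℝ}
    {FB : MvPolynomial (ι ⊕ κB) ℝ} {FT : MvPolynomial (ι ⊕ κT) ℝ}
    (hG : IsZeroProjection FG {z | h (z ∘ Sum.inl) = ((z (Sum.inr ()) : ℝ) : EReal)})
    (hB : IsZeroProjection FB {x | h x = ⊥}) (hT : IsZeroProjection FT {x | h x = ⊤})
    (x : ι → ℝ) :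
    optValue (fun y => eval (Sum.elim x y) upperPoly)
      (fun y => eval (Sum.elim x y) (lowerPoly FG FB FT)) = h x := by
  rw [optValue_lowerPoly_eq_prodObjective]
  set a : (Unit ⊕ κG → ℝ) → ℝ :=
    fun y₁ => eval (Sum.elim (Sum.elim x (y₁ ∘ Sum.inl)) (y₁ ∘ Sum.inr)) FG
  set b : (κB → ℝ) → ℝ := fun y₂ => eval (Sum.elim x y₂) FB
  set c : (κT ⊕ Fin 2 → ℝ) → ℝ := fun y₃ => eval (Sum.elim x y₃) (gapPoly FT)
  have ha : ∀ y₁, 0 ≤ a y₁ := fun y₁ => hG.nonneg _ _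
  have ha_eq : ∀ y₁, a y₁ = 0 → h x = y₁ (Sum.inl ()) := fun y₁ hy => (hG.mem_iff _).2 ⟨_, hy⟩
  have hb_pos : h x ≠ ⊥ → ∀ y₂, 0 < b y₂ := fun hx y₂ =>
    (hB.nonneg _ _).lt_of_ne' fun h0 => hx ((hB.mem_iff x).2 ⟨y₂, h0⟩)
  have hc : ∀ y₃, 0 < c y₃ := gapPoly_pos (hT.nonneg x)
  induction hx : h x using EReal.rec with
  | bot =>
    obtain ⟨w, hw⟩ := (hB.mem_iff x).1 hx
    exact optValue_prod_eq_bot ha (fun y₂ => hB.nonneg _ _) (fun y₃ => (hc y₃).le) hw 0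
      fun r => ⟨fun _ => r - 1, by simp⟩
  | top =>
    have ha' : ∀ y₁, 0 < a y₁ := fun y₁ =>
      (ha y₁).lt_of_ne' fun h0 => by simpa [hx] using ha_eq y₁ h0
    obtain ⟨t, ht⟩ := (hT.mem_iff x).1 hx
    exact optValue_prod_eq_top ha' (hb_pos (by simp [hx])) (gapPoly_exists_lt (hT.nonneg x) ht)
  | coe r =>
    obtain ⟨g, hg⟩ := (hG.mem_iff (Sum.elim x fun _ => r)).1 (by simpa using hx)
    exact optValue_prod_eq_coe ha (hb_pos (by simp [hx])) hc (y₁ := Sum.elim (fun _ => r) g)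
      hg 0 0 fun y₁ hy₁ => by simpa [hx] using (ha_eq y₁ hy₁).symm

end Construction

theorem exists_isPolyMap_valOpt_eq {n : ℕ} {V : Type*} [Fintype V]
    (p q : MvPolynomial (Fin n ⊕ V) ℝ) :
    ∃ (m : ℕ) (P Q : (Fin n → ℝ) → (Fin m → ℝ) → ℝ), IsPolyMap P ∧ IsPolyMap Q ∧
      ∀ x, valOpt P Q univ x =
        optValue (fun y => eval (Sum.elim x y) p) (fun y => eval (Sum.elim x y) q) := by
  let e := Fintype.equivFin V
  refine ⟨Fintype.card V, fun x y => eval (Sum.elim x (y ∘ e)) p,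
    fun x y => eval (Sum.elim x (y ∘ e)) q, ⟨rename (Sum.map id e) p, fun x y => ?_⟩,
    ⟨rename (Sum.map id e) q, fun x y => ?_⟩, fun x => ?_⟩
  · simp [eval_rename, Sum.elim_comp_map]
  · simp [eval_rename, Sum.elim_comp_map]
  · rw [valOpt_univ]
    exact optValue_comp_equiv (fun y => eval (Sum.elim x y) p) (fun y => eval (Sum.elim x y) q)
      (e.symm.arrowCongr (Equiv.refl ℝ))

/-- every extended-real-valued semi-algebraic function is the optimistic value
function of a polynomial bilevel problem with unconstrained lower level (`𝒴 = ℝᵐ`). -/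
theorem ereal_semialgebraic_is_optimistic_value (n : ℕ) (h : (Fin n → ℝ) → EReal)
    (hh : IsERealSemialgebraicFun h) :
    ∃ (m : ℕ) (P Q : (Fin n → ℝ) → (Fin m → ℝ) → ℝ),
      IsPolyMap P ∧ IsPolyMap Q ∧
      ∀ x, valOpt P Q Set.univ x = h x := by
  obtain ⟨-, htop, hbot, hgraph⟩ := hh
  obtain ⟨κG, _, FG, hG⟩ := hgraph.exists_isZeroProjection
  obtain ⟨κB, _, FB, hB⟩ := hbot.exists_isZeroProjection
  obtain ⟨κT, _, FT, hT⟩ := htop.exists_isZeroProjection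
  obtain ⟨m, P, Q, hP, hQ, hPQ⟩ :=
    exists_isPolyMap_valOpt_eq (upperPoly (κG := κG) (κB := κB) (κT := κT)) (lowerPoly FG FB FT)
  exact ⟨m, P, Q, hP, hQ, fun x => (hPQ x).trans (optValue_lowerPoly hG hB hT x)⟩
end
end

section
/- Let h : ℝⁿ → ℝ ∪ {±∞} be any extended-real-valued semi-algebraic function. Then there exist m ∈ ℕ and polynomials P, Q : ℝⁿ × ℝᵐ → ℝ such that the pessimistic value function φ_p of the bilevel problem with upper level P, lower level Q, and unconstrained lower-level feasible set 𝒴 = ℝᵐ satisfies φ_p = h. -/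
/-!
Every semi-algebraic set `S` is the projection of the zero set of a nonnegative polynomial
`C(z, w)` whose sections `C(z, ·)` attain their minimum: take `p² + ∑ⱼ (qⱼ wⱼ² - 1)²` for a basic
set `{p = 0, qⱼ > 0}`, and the product of such certificates for a finite union.

Given certificates `C_g`, `C_⊤`, `C_⊥` of the graph of `h` and of `{h = ⊤}`, `{h = ⊥}`, take the
upper level `P = r` and the lower level
`Q(x; r, w_g, w_⊤, w_⊥, t) = C_g(x, r, w_g) C_⊤(x, w_⊤) + t² (t² C_⊥(x, w_⊥) - 1)`.
The two summands share no variables, so the minimizers of `Q` are the products of theirs.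
The second summand has a minimizer iff `min C_⊥(x, ·) > 0`, i.e. iff `h x ≠ ⊥`; otherwise it tends
to `-∞` along `t`. The first one is nonnegative and has zeros. If `h x` is finite then
`C_⊤(x, ·) > 0`, so its zeros are exactly the points with `r = h x`; if `h x = ⊤` it vanishes for
every `r`.
-/

open Set

noncomputable section

open MvPolynomial Function

def polyFunctions (ι : Type*) : Subalgebra ℝ ((ι → ℝ) → ℝ) :=
  (aeval fun i (z : ι → ℝ) => z i).range

section PolyFunctions

variable {ι κ W : Type*}

lemma aeval_coord_apply (p : MvPolynomial ι ℝ) (z : ι → ℝ) :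
    aeval (fun i (z : ι → ℝ) => z i) p z = eval z p := by
  induction p using MvPolynomial.induction_on <;> simp_all

lemma mem_polyFunctions_iff {F : (ι → ℝ) → ℝ} :
    F ∈ polyFunctions ι ↔ ∃ p : MvPolynomial ι ℝ, ∀ z, F z = eval z p := by
  simp only [polyFunctions, AlgHom.mem_range, funext_iff, aeval_coord_apply, eq_comm]

lemma eval_mem_polyFunctions (p : MvPolynomial ι ℝ) : (fun z => eval z p) ∈ polyFunctions ι :=
  mem_polyFunctions_iff.2 ⟨p, fun _ => rfl⟩

lemma coord_mem_polyFunctions (i : ι) : (fun z : ι → ℝ => z i) ∈ polyFunctions ι := by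
  simpa using eval_mem_polyFunctions (X i)

lemma comp_mem_polyFunctions {F : (ι → ℝ) → ℝ} (hF : F ∈ polyFunctions ι)
    {G : (κ → ℝ) → ι → ℝ} (hG : ∀ i, (fun z => G z i) ∈ polyFunctions κ) :
    (fun z => F (G z)) ∈ polyFunctions κ := by
  obtain ⟨p, hFp⟩ := mem_polyFunctions_iff.1 hF
  obtain rfl : F = fun z => eval z p := funext hFp
  clear hF hFp
  induction p using MvPolynomial.induction_on with
  | C a => simp only [eval_C]; exact algebraMap_mem (polyFunctions κ) a
  | add p q hp hq => simp only [map_add]; exact add_mem hp hq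
  | mul_X p i hp => simp only [map_mul, eval_X]; exact mul_mem hp (hG i)

lemma comp₂_mem_polyFunctions {C : (ι → ℝ) → (W → ℝ) → ℝ}
    (hC : (fun v => C (v ∘ Sum.inl) (v ∘ Sum.inr)) ∈ polyFunctions (ι ⊕ W))
    {a : (κ → ℝ) → ι → ℝ} {b : (κ → ℝ) → W → ℝ}
    (ha : ∀ i, (fun u => a u i) ∈ polyFunctions κ) (hb : ∀ w, (fun u => b u w) ∈ polyFunctions κ) :
    (fun u => C (a u) (b u)) ∈ polyFunctions κ :=
  comp_mem_polyFunctions hC (G := fun u => Sum.elim (a u) (b u)) <| by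
    rintro (i | w); exacts [ha i, hb w]

lemma isPolyMap_iff {n m : ℕ} {P : (Fin n → ℝ) → (Fin m → ℝ) → ℝ} :
    IsPolyMap P ↔ (fun u => P (u ∘ Sum.inl) (u ∘ Sum.inr)) ∈ polyFunctions (Fin n ⊕ Fin m) := by
  rw [mem_polyFunctions_iff]
  refine exists_congr fun p => ⟨fun hp u => ?_, fun hp x y => hp (Sum.elim x y)⟩
  rw [hp, Sum.elim_comp_inl_inr]

end PolyFunctions

structure IsPolyCertificate {ι W : Type*} (S : Set (ι → ℝ)) (C : (ι → ℝ) → (W → ℝ) → ℝ) :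
    Prop where
  poly : (fun v => C (v ∘ Sum.inl) (v ∘ Sum.inr)) ∈ polyFunctions (ι ⊕ W)
  nonneg : ∀ z w, 0 ≤ C z w
  exists_forall_le : ∀ z, ∃ w₀, ∀ w, C z w₀ ≤ C z w
  mem_iff : ∀ z, z ∈ S ↔ ∃ w, C z w = 0

lemma IsPolyCertificate.pos_of_notMem {ι W : Type*} {S : Set (ι → ℝ)}
    {C : (ι → ℝ) → (W → ℝ) → ℝ} (hC : IsPolyCertificate S C) {z : ι → ℝ} (hz : z ∉ S)
    (w : W → ℝ) : 0 < C z w :=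
  (hC.nonneg z w).lt_of_ne' fun h0 => hz ((hC.mem_iff z).2 ⟨w, h0⟩)

lemma exists_mul_sq_eq_one_iff {a : ℝ} : (∃ t, a * t ^ 2 = 1) ↔ 0 < a := by
  refine ⟨fun ⟨t, ht⟩ => pos_of_mul_pos_left (ht ▸ one_pos) (sq_nonneg t), fun ha => ⟨√a⁻¹, ?_⟩⟩
  rw [Real.sq_sqrt (inv_nonneg.2 ha.le), mul_inv_cancel₀ ha.ne']

lemma exists_forall_sq_mul_sq_sub_one_le (a : ℝ) :
    ∃ t₀, ∀ t, (a * t₀ ^ 2 - 1) ^ 2 ≤ (a * t ^ 2 - 1) ^ 2 := by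
  by_cases ha : 0 < a
  · obtain ⟨t₀, ht₀⟩ := exists_mul_sq_eq_one_iff.2 ha
    exact ⟨t₀, fun t => by rw [ht₀, sub_self, sq 0, mul_zero]; positivity⟩
  · exact ⟨0, fun t => by nlinarith [mul_nonpos_of_nonpos_of_nonneg (not_lt.1 ha) (sq_nonneg t)]⟩

lemma isPolyCertificate_basic {ι : Type*} (p : MvPolynomial ι ℝ) {k : ℕ}
    (q : Fin k → MvPolynomial ι ℝ) :
    IsPolyCertificate {z | eval z p = 0 ∧ ∀ j, 0 < eval z (q j)}
      (fun z w => eval z p ^ 2 + ∑ j, (eval z (q j) * w j ^ 2 - 1) ^ 2) where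
  poly := by
    have heval (r : MvPolynomial ι ℝ) : (fun v : ι ⊕ Fin k → ℝ => eval (v ∘ Sum.inl) r) ∈ _ :=
      comp_mem_polyFunctions (eval_mem_polyFunctions r) fun i => coord_mem_polyFunctions (Sum.inl i)
    refine add_mem (pow_mem (heval p) 2) ?_
    rw [← Finset.sum_fn]
    exact sum_mem fun j _ => pow_mem (sub_mem (mul_mem (heval (q j))
      (pow_mem (coord_mem_polyFunctions (Sum.inr j)) 2)) (one_mem _)) 2
  nonneg _ _ := by positivity
  exists_forall_le z := by
    choose t ht using fun j => exists_forall_sq_mul_sq_sub_one_le (eval z (q j))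
    exact ⟨t, fun w => add_le_add le_rfl (Finset.sum_le_sum fun j _ => ht j (w j))⟩
  mem_iff z := by
    have hzero (w : Fin k → ℝ) : eval z p ^ 2 + ∑ j, (eval z (q j) * w j ^ 2 - 1) ^ 2 = 0 ↔
        eval z p = 0 ∧ ∀ j, eval z (q j) * w j ^ 2 = 1 := by
      rw [add_eq_zero_iff_of_nonneg (sq_nonneg _) (Finset.sum_nonneg fun j _ => sq_nonneg _),
        Finset.sum_eq_zero_iff_of_nonneg fun j _ => sq_nonneg _]
      simp [sub_eq_zero]
    simp only [Set.mem_ofPred_eq, ← exists_mul_sq_eq_one_iff, Classical.skolem, hzero,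
      exists_and_left]

lemma IsPolyCertificate.iUnion {ι I : Type*} [Fintype I] {W : I → Type*} {S : I → Set (ι → ℝ)}
    {C : ∀ i, (ι → ℝ) → (W i → ℝ) → ℝ} (hC : ∀ i, IsPolyCertificate (S i) (C i)) :
    IsPolyCertificate (⋃ i, S i) (fun z (w : (Σ i, W i) → ℝ) => ∏ i, C i z fun a => w ⟨i, a⟩) where
  poly := by
    rw [← Finset.prod_fn]
    refine prod_mem fun i _ => comp₂_mem_polyFunctions (hC i).poly (fun j => ?_) fun a => ?_ <;>
      exact coord_mem_polyFunctions _
  nonneg z w := Finset.prod_nonneg fun i _ => (hC i).nonneg _ _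
  exists_forall_le z := by
    choose w₀ hw₀ using fun i => (hC i).exists_forall_le z
    exact ⟨fun s => w₀ s.1 s.2,
      fun w => Finset.prod_le_prod (fun i _ => (hC i).nonneg _ _) fun i _ => hw₀ i _⟩
  mem_iff z := by
    choose w₀ hw₀ using fun i => (hC i).exists_forall_le z
    simp only [Set.mem_iUnion, (hC _).mem_iff]
    constructor
    · rintro ⟨i, w, hw⟩
      refine ⟨fun s => w₀ s.1 s.2, Finset.prod_eq_zero (Finset.mem_univ i) ?_⟩
      exact le_antisymm (hw ▸ hw₀ i w) ((hC i).nonneg _ _)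
    · rintro ⟨w, hw⟩
      obtain ⟨i, -, hi⟩ := Finset.prod_eq_zero_iff.1 hw
      exact ⟨i, _, hi⟩

lemma IsSemialgebraic.exists_isPolyCertificate {ι : Type} [Fintype ι] {S : Set (ι → ℝ)}
    (hS : IsSemialgebraic S) :
    ∃ (W : Type) (_ : Fintype W) (C : (ι → ℝ) → (W → ℝ) → ℝ), IsPolyCertificate S C := by
  obtain ⟨N, T, hT, rfl⟩ := hS
  choose p k q hq using hT
  exact ⟨_, inferInstance, _, .iUnion fun i => hq i ▸ isPolyCertificate_basic (p i) (q i)⟩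

def minimizers {Y : Type*} (q : Y → ℝ) : Set Y := {y | ∀ y', q y ≤ q y'}

section Minimizers

variable {Y Z A B : Type*}

lemma argminSet_univ {n m : ℕ} (Q : (Fin n → ℝ) → (Fin m → ℝ) → ℝ) (x : Fin n → ℝ) :
    argminSet Q univ x = minimizers (Q x) := by
  ext; simp [argminSet, minimizers]

lemma biSup_minimizers_comp {φ : Y → Z} (hφ : Surjective φ) (p q : Z → ℝ) :
    ⨆ y ∈ minimizers (q ∘ φ), (p (φ y) : EReal) = ⨆ z ∈ minimizers q, (p z : EReal) := by
  have hmin : minimizers (q ∘ φ) = φ ⁻¹' minimizers q := by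
    ext y; exact (hφ.forall (p := fun z => q (φ y) ≤ q z)).symm
  rw [hmin]
  exact hφ.iSup_comp fun z => ⨆ _ : z ∈ minimizers q, (p z : EReal)

lemma minimizers_add_prod (f : A → ℝ) (g : B → ℝ) :
    minimizers (fun ab : A × B => f ab.1 + g ab.2) = minimizers f ×ˢ minimizers g := by
  ext ⟨a, b⟩
  simp only [minimizers, mem_prod, Set.mem_ofPred_eq, Prod.forall]
  exact ⟨fun h => ⟨fun a' => by simpa using h a' b, fun b' => by simpa using h a b'⟩,
    fun h a' b' => add_le_add (h.1 a') (h.2 b')⟩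

lemma minimizers_eq_zeros {f : Y → ℝ} (hf : ∀ y, 0 ≤ f y) (h0 : ∃ y, f y = 0) :
    minimizers f = {y | f y = 0} := by
  obtain ⟨y₀, hy₀⟩ := h0
  ext y
  exact ⟨fun hy => le_antisymm (hy₀ ▸ hy y₀) (hf y), fun hy y' => hy ▸ hf y'⟩

end Minimizers

def penalty {V : Type*} (c : V → ℝ) (b : V × ℝ) : ℝ := b.2 ^ 2 * (b.2 ^ 2 * c b.1 - 1)

section Penalty

variable {V : Type*} {c : V → ℝ}

lemma minimizers_penalty_eq_empty {v : V} (hv : c v ≤ 0) : minimizers (penalty c) = ∅ := by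
  refine eq_empty_iff_forall_notMem.2 fun b hb => ?_
  set s := |penalty c b| + 1
  have hs : 0 ≤ s := by positivity
  have key : penalty c b ≤ √s ^ 2 * (√s ^ 2 * c v - 1) := hb (v, √s)
  rw [Real.sq_sqrt hs] at key
  have := mul_nonpos_of_nonneg_of_nonpos hs (mul_nonpos_of_nonneg_of_nonpos hs hv)
  linarith [neg_abs_le (penalty c b)]

lemma minimizers_penalty_nonempty {v₀ : V} (hv₀ : ∀ v, c v₀ ≤ c v) (hpos : 0 < c v₀) :
    (minimizers (penalty c)).Nonempty := by
  refine ⟨(v₀, √((2 * c v₀)⁻¹)), fun ⟨v, t⟩ => ?_⟩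
  simp only [penalty, Real.sq_sqrt (inv_nonneg.2 (by positivity : (0 : ℝ) ≤ 2 * c v₀))]
  calc (2 * c v₀)⁻¹ * ((2 * c v₀)⁻¹ * c v₀ - 1) = -(4 * c v₀)⁻¹ := by field_simp; ring
    _ ≤ t ^ 2 * (t ^ 2 * c v₀ - 1) := by
      rw [neg_le, inv_eq_one_div, le_div_iff₀ (by positivity)]
      nlinarith [sq_nonneg (2 * c v₀ * t ^ 2 - 1)]
    _ ≤ t ^ 2 * (t ^ 2 * c v - 1) := by gcongr; exact hv₀ v

end Penalty

def graphFactor {ι Wg Wt : Type*} (Cg : (ι ⊕ Unit → ℝ) → (Wg → ℝ) → ℝ)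
    (Ct : (ι → ℝ) → (Wt → ℝ) → ℝ) (x : ι → ℝ) (a : ℝ × (Wg → ℝ) × (Wt → ℝ)) : ℝ :=
  Cg (Sum.elim x fun _ => a.1) a.2.1 * Ct x a.2.2

section GraphFactor

variable {ι Wg Wt : Type*} {Cg : (ι ⊕ Unit → ℝ) → (Wg → ℝ) → ℝ} {Ct : (ι → ℝ) → (Wt → ℝ) → ℝ}
  {x : ι → ℝ}

lemma graphFactor_nonneg (hCg : ∀ z w, 0 ≤ Cg z w) (hCt : ∀ w, 0 ≤ Ct x w)
    (a : ℝ × (Wg → ℝ) × (Wt → ℝ)) : 0 ≤ graphFactor Cg Ct x a :=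
  mul_nonneg (hCg _ _) (hCt _)

lemma biSup_minimizers_graphFactor_eq_top (hCg : ∀ z w, 0 ≤ Cg z w) (hCt : ∀ w, 0 ≤ Ct x w)
    {wt : Wt → ℝ} (hwt : Ct x wt = 0) :
    ⨆ a ∈ minimizers (graphFactor Cg Ct x), (a.1 : EReal) = ⊤ := by
  have hzero (r : ℝ) : graphFactor Cg Ct x (r, 0, wt) = 0 := by simp [graphFactor, hwt]
  rw [minimizers_eq_zeros (graphFactor_nonneg hCg hCt) ⟨_, hzero 0⟩, EReal.eq_top_iff_forall_lt]
  exact fun r => (EReal.coe_lt_coe_iff.2 (lt_add_one r)).trans_le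
    (le_iSup₂_of_le (r + 1, 0, wt) (hzero _) le_rfl)

lemma biSup_minimizers_graphFactor_eq_coe (hCg : ∀ z w, 0 ≤ Cg z w) (hCt : ∀ w, 0 < Ct x w)
    {r₀ : ℝ} (hgraph : ∀ r, r = r₀ ↔ ∃ wg, Cg (Sum.elim x fun _ => r) wg = 0) :
    ⨆ a ∈ minimizers (graphFactor Cg Ct x), (a.1 : EReal) = r₀ := by
  obtain ⟨wg, hwg⟩ := (hgraph r₀).1 rfl
  have hzero : graphFactor Cg Ct x (r₀, wg, 0) = 0 := by simp [graphFactor, hwg]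
  rw [minimizers_eq_zeros (graphFactor_nonneg hCg fun w => (hCt w).le) ⟨_, hzero⟩]
  refine le_antisymm (iSup₂_le fun a ha => ?_) (le_iSup₂_of_le _ hzero le_rfl)
  rw [(hgraph a.1).2 ⟨a.2.1, (mul_eq_zero.1 ha).resolve_right (hCt _).ne'⟩]

end GraphFactor

theorem biSup_minimizers_graphFactor_add_penalty {ι Wg Wt Wb : Type*} {h : (ι → ℝ) → EReal}
    {Cg : (ι ⊕ Unit → ℝ) → (Wg → ℝ) → ℝ} {Ct : (ι → ℝ) → (Wt → ℝ) → ℝ}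
    {Cb : (ι → ℝ) → (Wb → ℝ) → ℝ}
    (hCg : IsPolyCertificate {z | h (z ∘ Sum.inl) = ((z (Sum.inr ()) : ℝ) : EReal)} Cg)
    (hCt : IsPolyCertificate {x | h x = ⊤} Ct) (hCb : IsPolyCertificate {x | h x = ⊥} Cb)
    (x : ι → ℝ) :
    ⨆ v ∈ minimizers (fun v : (ℝ × (Wg → ℝ) × (Wt → ℝ)) × ((Wb → ℝ) × ℝ) =>
      graphFactor Cg Ct x v.1 + penalty (Cb x) v.2), (v.1.1 : EReal) = h x := by
  rw [minimizers_add_prod, biSup_prod]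
  by_cases hbot : h x = ⊥
  · obtain ⟨w, hw⟩ := (hCb.mem_iff x).1 hbot
    simp [minimizers_penalty_eq_empty hw.le, hbot]
  obtain ⟨wb, hwb⟩ := hCb.exists_forall_le x
  simp only [biSup_const (minimizers_penalty_nonempty hwb (hCb.pos_of_notMem hbot wb))]
  cases hx : h x using EReal.rec with
  | bot => exact absurd hx hbot
  | coe r₀ =>
    refine biSup_minimizers_graphFactor_eq_coe hCg.nonneg
      (hCt.pos_of_notMem (by simp [hx])) fun r => ?_
    simpa [hx, eq_comm] using hCg.mem_iff (Sum.elim x fun _ => r)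
  | top =>
    obtain ⟨wt, hwt⟩ := (hCt.mem_iff x).1 hx
    exact biSup_minimizers_graphFactor_eq_top hCg.nonneg (hCt.nonneg x) hwt

lemma exists_isPolyMap_valPess_eq {n : ℕ} {κ : Type*} [Fintype κ]
    (p q : (Fin n → ℝ) → (κ → ℝ) → ℝ)
    (hp : (fun u => p (u ∘ Sum.inl) (u ∘ Sum.inr)) ∈ polyFunctions (Fin n ⊕ κ))
    (hq : (fun u => q (u ∘ Sum.inl) (u ∘ Sum.inr)) ∈ polyFunctions (Fin n ⊕ κ)) :
    ∃ (m : ℕ) (P Q : (Fin n → ℝ) → (Fin m → ℝ) → ℝ), IsPolyMap P ∧ IsPolyMap Q ∧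
      ∀ x, valPess P Q univ x = ⨆ y ∈ minimizers (q x), (p x y : EReal) := by
  let e := Fintype.equivFin κ
  have hpoly (F : (Fin n → ℝ) → (κ → ℝ) → ℝ)
      (hF : (fun u => F (u ∘ Sum.inl) (u ∘ Sum.inr)) ∈ polyFunctions (Fin n ⊕ κ)) :
      IsPolyMap fun x (y : Fin (Fintype.card κ) → ℝ) => F x (y ∘ e) :=
    isPolyMap_iff.2 (comp₂_mem_polyFunctions hF (fun i => coord_mem_polyFunctions _)
      fun k => coord_mem_polyFunctions _)
  refine ⟨_, fun x y => p x (y ∘ e), fun x y => q x (y ∘ e), hpoly p hp, hpoly q hq, fun x => ?_⟩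
  rw [valPess, argminSet_univ]
  exact biSup_minimizers_comp (φ := (· ∘ e)) (fun z => ⟨z ∘ e.symm, by ext; simp⟩) (p x) (q x)

section LowerObjective

variable {ι Wg Wt Wb : Type*}

def decodeLower (y : (Unit ⊕ Wg ⊕ Wt) ⊕ (Wb ⊕ Unit) → ℝ) :
    (ℝ × (Wg → ℝ) × (Wt → ℝ)) × ((Wb → ℝ) × ℝ) :=
  ((y (.inl (.inl ())), fun w => y (.inl (.inr (.inl w))), fun w => y (.inl (.inr (.inr w)))),
    (fun w => y (.inr (.inl w)), y (.inr (.inr ()))))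

lemma decodeLower_surjective : Surjective (decodeLower (Wg := Wg) (Wt := Wt) (Wb := Wb)) :=
  fun v => ⟨Sum.elim (Sum.elim (fun _ => v.1.1) (Sum.elim v.1.2.1 v.1.2.2))
    (Sum.elim v.2.1 fun _ => v.2.2), rfl⟩

def lowerObjective (Cg : (ι ⊕ Unit → ℝ) → (Wg → ℝ) → ℝ) (Ct : (ι → ℝ) → (Wt → ℝ) → ℝ)
    (Cb : (ι → ℝ) → (Wb → ℝ) → ℝ) (x : ι → ℝ) (y : (Unit ⊕ Wg ⊕ Wt) ⊕ (Wb ⊕ Unit) → ℝ) : ℝ :=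
  graphFactor Cg Ct x (decodeLower y).1 + penalty (Cb x) (decodeLower y).2

variable {Cg : (ι ⊕ Unit → ℝ) → (Wg → ℝ) → ℝ} {Ct : (ι → ℝ) → (Wt → ℝ) → ℝ}
  {Cb : (ι → ℝ) → (Wb → ℝ) → ℝ}

lemma lowerObjective_mem_polyFunctions
    (hCg : (fun v => Cg (v ∘ Sum.inl) (v ∘ Sum.inr)) ∈ polyFunctions ((ι ⊕ Unit) ⊕ Wg))
    (hCt : (fun v => Ct (v ∘ Sum.inl) (v ∘ Sum.inr)) ∈ polyFunctions (ι ⊕ Wt))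
    (hCb : (fun v => Cb (v ∘ Sum.inl) (v ∘ Sum.inr)) ∈ polyFunctions (ι ⊕ Wb)) :
    (fun u => lowerObjective Cg Ct Cb (u ∘ Sum.inl) (u ∘ Sum.inr)) ∈
      polyFunctions (ι ⊕ ((Unit ⊕ Wg ⊕ Wt) ⊕ (Wb ⊕ Unit))) := by
  simp only [lowerObjective, graphFactor, penalty, decodeLower]
  refine add_mem (mul_mem (comp₂_mem_polyFunctions hCg ?_ ?_) (comp₂_mem_polyFunctions hCt ?_ ?_))
    (mul_mem (pow_mem ?_ 2) (sub_mem (mul_mem (pow_mem ?_ 2)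
      (comp₂_mem_polyFunctions hCb ?_ ?_)) (one_mem _)))
  all_goals first
    | exact coord_mem_polyFunctions _
    | exact fun _ => coord_mem_polyFunctions _
    | rintro (_ | _) <;> exact coord_mem_polyFunctions _

theorem biSup_minimizers_lowerObjective {h : (ι → ℝ) → EReal}
    (hCg : IsPolyCertificate {z | h (z ∘ Sum.inl) = ((z (Sum.inr ()) : ℝ) : EReal)} Cg)
    (hCt : IsPolyCertificate {x | h x = ⊤} Ct) (hCb : IsPolyCertificate {x | h x = ⊥} Cb)
    (x : ι → ℝ) :
    ⨆ y ∈ minimizers (lowerObjective Cg Ct Cb x), (y (.inl (.inl ())) : EReal) = h x :=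
  (biSup_minimizers_comp decodeLower_surjective (fun v => v.1.1)
    fun v => graphFactor Cg Ct x v.1 + penalty (Cb x) v.2).trans
    (biSup_minimizers_graphFactor_add_penalty hCg hCt hCb x)

end LowerObjective

/-- every extended-real-valued semi-algebraic function is the pessimistic value
function of a polynomial bilevel problem with unconstrained lower level (`𝒴 = ℝᵐ`). -/
theorem ereal_semialgebraic_is_pessimistic_value (n : ℕ) (h : (Fin n → ℝ) → EReal)
    (hh : IsERealSemialgebraicFun h) :
    ∃ (m : ℕ) (P Q : (Fin n → ℝ) → (Fin m → ℝ) → ℝ),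
      IsPolyMap P ∧ IsPolyMap Q ∧
      ∀ x, valPess P Q Set.univ x = h x := by
  obtain ⟨-, htop, hbot, hgraph⟩ := hh
  obtain ⟨Wt, _, Ct, hCt⟩ := htop.exists_isPolyCertificate
  obtain ⟨Wb, _, Cb, hCb⟩ := hbot.exists_isPolyCertificate
  obtain ⟨Wg, _, Cg, hCg⟩ := hgraph.exists_isPolyCertificate
  obtain ⟨m, P, Q, hP, hQ, hPQ⟩ := exists_isPolyMap_valPess_eq (fun _ y => y (.inl (.inl ())))
    (lowerObjective Cg Ct Cb) (coord_mem_polyFunctions _)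
    (lowerObjective_mem_polyFunctions hCg.poly hCt.poly hCb.poly)
  exact ⟨m, P, Q, hP, hQ, fun x => (hPQ x).trans (biSup_minimizers_lowerObjective hCg hCt hCb x)⟩
end
end

section
/- Let f : ℝⁿ → ℝ be a piecewise polynomial function. Then there exist m ∈ ℕ, polynomials P, Q : ℝⁿ × ℝᵐ → ℝ with Q(x,·) convex on ℝᵐ for every fixed x, and a box 𝒴 ⊆ ℝᵐ, such that the optimistic value function φ_o of the associated bilevel problem satisfies φ_o = f. -/
open Set

noncomputable section

/-!
Every semi-algebraic set is cut out by finitely many strict sign conditions `0 < g k`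
(an equation `p = 0` is the condition `¬ 0 < p ^ 2`), so a piecewise polynomial `f` is of the
form `f x = F_β (x)`, where `β ∈ {0,1}^s` is the sign pattern of `g` at `x` and each `F_b` is a
polynomial.

Take `Y = [0, ∞)^s` and the convex lower-level objective `Q(x, y) = ∑ₖ (gₖ(x) yₖ - 1)²`.
Its minimisers over `Y` are exactly the `y ≥ 0` with `gₖ(x) yₖ = βₖ`: the `k`-th term vanishes
when `gₖ(x) > 0`, and otherwise `gₖ(x) yₖ ≤ 0`, so the term is least when `gₖ(x) yₖ = 0`.
The multilinear interpolant `P(x, y) = ∑_b F_b(x) ∏ₖ (bₖ ? gₖ(x) yₖ : 1 - gₖ(x) yₖ)` therefore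
equals `F_β (x) = f x` at every minimiser, and so does the optimistic value.
-/

open MvPolynomial

section ConvexSum

variable {𝕜 E β ι : Type*} [Semiring 𝕜] [PartialOrder 𝕜] [AddCommMonoid E] [AddCommMonoid β]
  [PartialOrder β] [IsOrderedAddMonoid β] [SMul 𝕜 E] [Module 𝕜 β] {s : Set E}

theorem ConvexOn.fun_sum {t : Finset ι} {f : ι → E → β} (hs : Convex 𝕜 s)
    (h : ∀ i ∈ t, ConvexOn 𝕜 s (f i)) : ConvexOn 𝕜 s fun x => ∑ i ∈ t, f i x := by
  classical
  induction t using Finset.induction_on with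
  | empty => simpa using convexOn_const (0 : β) hs
  | insert a t ha ih =>
    simp only [Finset.sum_insert ha]
    exact (h a (Finset.mem_insert_self a t)).add
      (ih fun i hi => h i (Finset.mem_insert_of_mem hi))

end ConvexSum

def signPattern {ι κ : Type*} (g : κ → MvPolynomial ι ℝ) (x : ι → ℝ) : κ → Bool :=
  fun k => decide (0 < eval x (g k))

def IsSignPatternSet {ι : Type} (S : Set (ι → ℝ)) : Prop :=
  ∃ (κ : Type) (_ : Fintype κ) (g : κ → MvPolynomial ι ℝ) (A : Set (κ → Bool)),
    S = signPattern g ⁻¹' A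

theorem exists_common_signPattern {ι N : Type} [Fintype N] {S : N → Set (ι → ℝ)}
    (hS : ∀ i, IsSignPatternSet (S i)) :
    ∃ (κ : Type) (_ : Fintype κ) (g : κ → MvPolynomial ι ℝ) (A : N → Set (κ → Bool)),
      ∀ i, S i = signPattern g ⁻¹' A i := by
  choose κ hκ g A hA using hS
  exact ⟨(i : N) × κ i, inferInstance, fun p => g p.1 p.2,
    fun i => {B | (fun k => B ⟨i, k⟩) ∈ A i}, fun i => hA i⟩

theorem IsBasicSemialgebraic.isSignPatternSet {ι : Type} [Fintype ι] {S : Set (ι → ℝ)}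
    (hS : IsBasicSemialgebraic S) : IsSignPatternSet S := by
  obtain ⟨p, k, q, rfl⟩ := hS
  refine ⟨Option (Fin k), inferInstance, fun o => o.elim (p ^ 2) q,
    {B | B none = false ∧ ∀ j, B (some j) = true}, ?_⟩
  ext x
  simp only [signPattern, mem_preimage, mem_ofPred_eq, Option.elim, decide_eq_false_iff_not,
    decide_eq_true_eq, map_pow, not_lt, sq_nonpos_iff]

theorem IsSemialgebraic.isSignPatternSet {ι : Type} [Fintype ι] {S : Set (ι → ℝ)}
    (hS : IsSemialgebraic S) : IsSignPatternSet S := by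
  obtain ⟨N, T, hT, rfl⟩ := hS
  obtain ⟨κ, _, g, A, hA⟩ := exists_common_signPattern fun i => (hT i).isSignPatternSet
  exact ⟨κ, inferInstance, g, ⋃ i, A i, by simp_rw [hA, preimage_iUnion]⟩

theorem IsPiecewisePolynomial.exists_eq_eval_signPattern {n : ℕ} {f : (Fin n → ℝ) → ℝ}
    (hf : IsPiecewisePolynomial f) :
    ∃ (s : ℕ) (g : Fin s → MvPolynomial (Fin n) ℝ) (F : (Fin s → Bool) → MvPolynomial (Fin n) ℝ),
      ∀ x, f x = eval x (F (signPattern g x)) := by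
  classical
  obtain ⟨N, S, p, hS, -, hcover, hp⟩ := hf
  obtain ⟨κ, _, g, A, hA⟩ := exists_common_signPattern fun i => (hS i).isSignPatternSet
  let F : (κ → Bool) → MvPolynomial (Fin n) ℝ := fun B =>
    if h : ∃ i, B ∈ A i then p h.choose else 0
  have hF : ∀ x, f x = eval x (F (signPattern g x)) := by
    intro x
    obtain ⟨i, hi⟩ := mem_iUnion.1 (hcover ▸ mem_univ x)
    have hx : ∃ i, signPattern g x ∈ A i := ⟨i, by rwa [hA] at hi⟩
    simp only [F, dif_pos hx]
    exact hp _ x (by rw [hA]; exact hx.choose_spec)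
  let e := Fintype.equivFin κ
  refine ⟨Fintype.card κ, g ∘ e.symm, fun B => F (B ∘ e), fun x => ?_⟩
  change f x = eval x (F (signPattern g x ∘ e.symm ∘ e))
  rw [e.symm_comp_self, Function.comp_id]
  exact hF x

theorem sq_ite_pos_sub_one_le {a t : ℝ} (ht : 0 ≤ t) :
    ((if 0 < a then 1 else 0) - 1) ^ 2 ≤ (a * t - 1) ^ 2 := by
  split_ifs with ha
  · simpa using sq_nonneg (a * t - 1)
  · nlinarith [mul_nonpos_of_nonpos_of_nonneg (not_lt.1 ha) ht]

theorem mul_eq_ite_pos_of_sq_le {a t : ℝ} (ht : 0 ≤ t)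
    (h : (a * t - 1) ^ 2 ≤ ((if 0 < a then 1 else 0) - 1) ^ 2) :
    a * t = if 0 < a then 1 else 0 := by
  split_ifs at h ⊢ with ha
  · nlinarith [sq_nonneg (a * t - 1)]
  · nlinarith [mul_nonpos_of_nonpos_of_nonneg (not_lt.1 ha) ht]

theorem exists_nonneg_mul_eq_ite_pos (a : ℝ) : ∃ t, 0 ≤ t ∧ a * t = if 0 < a then 1 else 0 := by
  split_ifs with ha
  · exact ⟨a⁻¹, inv_nonneg.2 ha.le, mul_inv_cancel₀ ha.ne'⟩
  · exact ⟨0, le_rfl, mul_zero a⟩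

theorem sum_mul_prod_ite_bool_eq {κ R : Type*} [Fintype κ] [DecidableEq κ] [CommRing R]
    (c : (κ → Bool) → R) (β : κ → Bool) :
    ∑ b, c b * ∏ k, (if b k then (if β k then 1 else 0) else 1 - if β k then 1 else 0 : R) =
      c β := by
  rw [Fintype.sum_eq_single β fun b hb => ?_]
  · rw [Finset.prod_eq_one fun k _ => by cases β k <;> simp, mul_one]
  · obtain ⟨k, hk⟩ := Function.ne_iff.1 hb
    rw [Finset.prod_eq_zero (Finset.mem_univ k), mul_zero]
    cases h : b k <;> simp_all

theorem valOpt_eq_of_forall_mem_argminSet {n m : ℕ} {P Q : (Fin n → ℝ) → (Fin m → ℝ) → ℝ}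
    {Y : Set (Fin m → ℝ)} {x : Fin n → ℝ} {c : ℝ} (hne : (argminSet Q Y x).Nonempty)
    (h : ∀ y ∈ argminSet Q Y x, P x y = c) : valOpt P Q Y x = c :=
  calc valOpt P Q Y x = ⨅ y ∈ argminSet Q Y x, (c : EReal) :=
        biInf_congr fun y hy => by rw [h y hy]
    _ = c := biInf_const hne

theorem isBox_Ici_zero {m : ℕ} : IsBox (Ici (0 : Fin m → ℝ)) :=
  ⟨0, ⊤, by ext y; simp [Pi.le_def]⟩

namespace SignPatternBilevel

variable {n s : ℕ} (g : Fin s → MvPolynomial (Fin n) ℝ)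
  (F : (Fin s → Bool) → MvPolynomial (Fin n) ℝ)

def lowerObjective (x : Fin n → ℝ) (y : Fin s → ℝ) : ℝ :=
  ∑ k, (eval x (g k) * y k - 1) ^ 2

def upperObjective (x : Fin n → ℝ) (y : Fin s → ℝ) : ℝ :=
  ∑ b, eval x (F b) * ∏ k, if b k then eval x (g k) * y k else 1 - eval x (g k) * y k

theorem isPolyMap_lowerObjective : IsPolyMap (lowerObjective g) :=
  ⟨∑ k, (rename Sum.inl (g k) * X (Sum.inr k) - 1) ^ 2, fun x y => by
    simp [lowerObjective, eval_rename, Function.comp_def]⟩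

theorem isPolyMap_upperObjective : IsPolyMap (upperObjective g F) :=
  ⟨∑ b, rename Sum.inl (F b) * ∏ k, if b k then rename Sum.inl (g k) * X (Sum.inr k)
      else 1 - rename Sum.inl (g k) * X (Sum.inr k), fun x y => by
    simp [upperObjective, eval_rename, Function.comp_def, apply_ite (eval _)]⟩

theorem convexOn_lowerObjective (x : Fin n → ℝ) : ConvexOn ℝ univ (lowerObjective g x) := by
  refine ConvexOn.fun_sum convex_univ fun k _ => ?_
  let A : (Fin s → ℝ) →ᵃ[ℝ] ℝ :=
    (eval x (g k) • LinearMap.proj k).toAffineMap + AffineMap.const ℝ _ (-1)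
  have hA : (fun y : Fin s → ℝ => (eval x (g k) * y k - 1) ^ 2) = (· ^ 2) ∘ A := by
    ext y
    simp [A, sub_eq_add_neg]
  rw [hA]
  exact even_two.convexOn_pow.comp_affineMap A

theorem mem_argminSet_lowerObjective_iff {x : Fin n → ℝ} {y : Fin s → ℝ} :
    y ∈ argminSet (lowerObjective g) (Ici 0) x ↔
      0 ≤ y ∧ ∀ k, eval x (g k) * y k = if 0 < eval x (g k) then 1 else 0 := by
  set c : Fin s → ℝ := fun k => if 0 < eval x (g k) then 1 else 0
  have hmin : ∀ z ∈ Ici (0 : Fin s → ℝ), ∑ k, (c k - 1) ^ 2 ≤ lowerObjective g x z :=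
    fun z hz => Finset.sum_le_sum fun k _ => sq_ite_pos_sub_one_le (hz k)
  constructor
  · rintro ⟨hy, hymin⟩
    choose t ht0 ht using fun k => exists_nonneg_mul_eq_ite_pos (eval x (g k))
    have hle : lowerObjective g x y ≤ ∑ k, (c k - 1) ^ 2 := by
      simpa [lowerObjective, ht] using hymin t ht0
    have htermwise := (Finset.sum_eq_sum_iff_of_le fun k _ =>
      sq_ite_pos_sub_one_le (hy k)).1 ((hmin y hy).antisymm hle)
    exact ⟨hy, fun k => mul_eq_ite_pos_of_sq_le (hy k) (htermwise k (Finset.mem_univ k)).ge⟩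
  · rintro ⟨hy, hc⟩
    refine ⟨hy, fun z hz => ?_⟩
    calc lowerObjective g x y = ∑ k, (c k - 1) ^ 2 := by simp [lowerObjective, hc, c]
      _ ≤ _ := hmin z hz

theorem argminSet_lowerObjective_nonempty (x : Fin n → ℝ) :
    (argminSet (lowerObjective g) (Ici 0) x).Nonempty := by
  choose t ht0 ht using fun k => exists_nonneg_mul_eq_ite_pos (eval x (g k))
  exact ⟨t, (mem_argminSet_lowerObjective_iff g).2 ⟨ht0, ht⟩⟩

theorem upperObjective_eq_of_mem_argminSet {x : Fin n → ℝ} {y : Fin s → ℝ}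
    (hy : y ∈ argminSet (lowerObjective g) (Ici 0) x) :
    upperObjective g F x y = eval x (F (signPattern g x)) := by
  obtain ⟨-, hc⟩ := (mem_argminSet_lowerObjective_iff g).1 hy
  have hc' : ∀ k, eval x (g k) * y k = if signPattern g x k then 1 else 0 := by
    simpa [signPattern] using hc
  simp only [upperObjective, hc']
  exact sum_mul_prod_ite_bool_eq _ _

end SignPatternBilevel

open SignPatternBilevel

/-- every piecewise polynomial function is the optimistic value function of a
polynomial bilevel problem with convex lower-level objective over a box. -/
theorem piecewise_poly_is_convex_lower_optimistic_value (n : ℕ) (f : (Fin n → ℝ) → ℝ)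
    (hf : IsPiecewisePolynomial f) :
    ∃ (m : ℕ) (P Q : (Fin n → ℝ) → (Fin m → ℝ) → ℝ) (Y : Set (Fin m → ℝ)),
      IsPolyMap P ∧ IsPolyMap Q ∧ (∀ x, ConvexOn ℝ Set.univ (Q x)) ∧ IsBox Y ∧
      ∀ x, valOpt P Q Y x = ((f x : ℝ) : EReal) := by
  obtain ⟨s, g, F, hgF⟩ := hf.exists_eq_eval_signPattern
  refine ⟨s, upperObjective g F, lowerObjective g, Ici 0, isPolyMap_upperObjective g F,
    isPolyMap_lowerObjective g, convexOn_lowerObjective g, isBox_Ici_zero, fun x => ?_⟩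
  rw [hgF x]
  exact valOpt_eq_of_forall_mem_argminSet (argminSet_lowerObjective_nonempty g x)
    fun y hy => upperObjective_eq_of_mem_argminSet g F hy
end
end

section
/- Let f : ℝⁿ → ℝ be a piecewise polynomial function. Then there exist m ∈ ℕ, polynomials P, Q : ℝⁿ × ℝᵐ → ℝ with Q(x,·) convex on ℝᵐ for every fixed x, and a box 𝒴 ⊆ ℝᵐ, such that the pessimistic value function φ_p of the associated bilevel problem satisfies φ_p = f. -/
open Set

noncomputable section

/-!
Write every piece as a finite union of basic sets `{A_b = 0, C_{b,l} > 0}`. The lower level picks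
weights `s_b ≥ 0` and multipliers `t_{b,l} ≥ 0` minimising the sum of squares
`∑ (A_b(x) s_b)² + ∑ (s_b - C_{b,l}(x) t_{b,l})² + (∑ s_b - 1)²`, which is convex in `(s, t)`.
Its minimum `0` is attained by putting all the weight on a basic set containing `x`, and at any
zero, `s_b > 0` forces `A_b(x) = 0` and `C_{b,l}(x) t_{b,l} = s_b > 0`, i.e. `x` lies in the
`b`-th basic set. So the upper objective `∑ s_b p_b(x)` equals `f x` on the whole argmin set.
-/

open MvPolynomial

section Convexity

variable {𝕜 E β ι : Type*}

theorem convexOn_finsetSum [Semiring 𝕜] [PartialOrder 𝕜] [AddCommMonoid E] [SMul 𝕜 E]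
    [AddCommMonoid β] [PartialOrder β] [IsOrderedAddMonoid β] [Module 𝕜 β] {s : Set E}
    (hs : Convex 𝕜 s) (t : Finset ι) {f : ι → E → β} (hf : ∀ i ∈ t, ConvexOn 𝕜 s (f i)) :
    ConvexOn 𝕜 s fun x => ∑ i ∈ t, f i x := by
  induction t using Finset.cons_induction with
  | empty => simpa using convexOn_const 0 hs
  | cons i t hi ih =>
    simp only [Finset.sum_cons]
    exact (hf i (t.mem_cons_self i)).add (ih fun j hj => hf j (Finset.mem_cons_of_mem hj))

theorem convexOn_univ_sq_comp_affineMap [Field 𝕜] [LinearOrder 𝕜] [IsStrictOrderedRing 𝕜]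
    [AddCommGroup E] [Module 𝕜 E] (g : E →ᵃ[𝕜] 𝕜) : ConvexOn 𝕜 univ fun y => g y ^ 2 :=
  (Even.convexOn_pow even_two).comp_affineMap g

end Convexity

section Argmin

variable {n m : ℕ} {P Q : (Fin n → ℝ) → (Fin m → ℝ) → ℝ} {Y : Set (Fin m → ℝ)}
  {x : Fin n → ℝ}

theorem mem_argminSet_iff_of_nonneg {y₀ : Fin m → ℝ} (hQ : ∀ y ∈ Y, 0 ≤ Q x y) (hy₀ : y₀ ∈ Y)
    (hQy₀ : Q x y₀ = 0) {y : Fin m → ℝ} : y ∈ argminSet Q Y x ↔ y ∈ Y ∧ Q x y = 0 :=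
  ⟨fun hy => ⟨hy.1, le_antisymm (hQy₀ ▸ hy.2 y₀ hy₀) (hQ y hy.1)⟩,
    fun hy => ⟨hy.1, fun y' hy' => hy.2 ▸ hQ y' hy'⟩⟩

theorem valPess_eq_of_forall_mem_argminSet {c : ℝ} (hne : (argminSet Q Y x).Nonempty)
    (hP : ∀ y ∈ argminSet Q Y x, P x y = c) : valPess P Q Y x = c := by
  rw [valPess, ← biSup_const (a := (c : EReal)) hne]
  exact biSup_congr fun y hy => by rw [hP y hy]

end Argmin

theorem isBox_nonneg (m : ℕ) : IsBox {y : Fin m → ℝ | ∀ i, 0 ≤ y i} :=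
  ⟨0, ⊤, by ext y; simp⟩

def basicSet {n k : ℕ} (A : MvPolynomial (Fin n) ℝ) (C : Fin k → MvPolynomial (Fin n) ℝ) :
    Set (Fin n → ℝ) :=
  {x | eval x A = 0 ∧ ∀ l, 0 < eval x (C l)}

namespace PiecewiseBilevel

variable {n m : ℕ} {β : Type*} [Fintype β] {k : β → ℕ} (e : β ⊕ (Σ b, Fin (k b)) ≃ Fin m)
  (A : β → MvPolynomial (Fin n) ℝ) (C : ∀ b, Fin (k b) → MvPolynomial (Fin n) ℝ)
  (p : β → MvPolynomial (Fin n) ℝ)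

def weight (y : Fin m → ℝ) (b : β) : ℝ := y (e (.inl b))

def multiplier (y : Fin m → ℝ) (j : Σ b, Fin (k b)) : ℝ := y (e (.inr j))

def lowerObjective (x : Fin n → ℝ) (y : Fin m → ℝ) : ℝ :=
  ∑ b, (eval x (A b) * weight e y b) ^ 2
    + ∑ j : Σ b, Fin (k b), (weight e y j.1 - eval x (C j.1 j.2) * multiplier e y j) ^ 2
    + (∑ b, weight e y b - 1) ^ 2

def upperObjective (x : Fin n → ℝ) (y : Fin m → ℝ) : ℝ :=
  ∑ b, weight e y b * eval x (p b)

theorem isPolyMap_upperObjective : IsPolyMap (upperObjective e p) :=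
  ⟨∑ b, X (.inr (e (.inl b))) * rename Sum.inl (p b), fun x y => by
    simp [upperObjective, weight, eval_rename, Function.comp_def]⟩

theorem isPolyMap_lowerObjective : IsPolyMap (lowerObjective e A C) :=
  ⟨∑ b, (rename Sum.inl (A b) * X (.inr (e (.inl b)))) ^ 2
    + ∑ j : Σ b, Fin (k b),
        (X (.inr (e (.inl j.1))) - rename Sum.inl (C j.1 j.2) * X (.inr (e (.inr j)))) ^ 2
    + (∑ b, X (.inr (e (.inl b))) - 1) ^ 2, fun x y => by
    simp [lowerObjective, weight, multiplier, eval_rename, Function.comp_def]⟩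

theorem convexOn_lowerObjective (x : Fin n → ℝ) : ConvexOn ℝ univ (lowerObjective e A C x) := by
  let coord (i : Fin m) : (Fin m → ℝ) →ₗ[ℝ] ℝ := LinearMap.proj i
  refine ((convexOn_finsetSum convex_univ _ fun b _ => ?_).add
    (convexOn_finsetSum convex_univ _ fun j _ => ?_)).add ?_
  · exact convexOn_univ_sq_comp_affineMap (eval x (A b) • coord (e (.inl b))).toAffineMap
  · exact convexOn_univ_sq_comp_affineMap
      (coord (e (.inl j.1)) - eval x (C j.1 j.2) • coord (e (.inr j))).toAffineMap
  · refine (convexOn_univ_sq_comp_affineMap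
      (LinearMap.toAffineMap (∑ b, coord (e (.inl b))) - AffineMap.const ℝ _ 1)).congr
        fun y _ => ?_
    simp [weight, coord]

theorem lowerObjective_nonneg (x : Fin n → ℝ) (y : Fin m → ℝ) : 0 ≤ lowerObjective e A C x y := by
  unfold lowerObjective
  positivity

theorem lowerObjective_eq_zero_iff {x : Fin n → ℝ} {y : Fin m → ℝ} :
    lowerObjective e A C x y = 0 ↔
      (∀ b, eval x (A b) * weight e y b = 0) ∧
      (∀ j : Σ b, Fin (k b), weight e y j.1 = eval x (C j.1 j.2) * multiplier e y j) ∧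
      ∑ b, weight e y b = 1 := by
  rw [lowerObjective, add_eq_zero_iff_of_nonneg (by positivity) (by positivity),
    add_eq_zero_iff_of_nonneg (by positivity) (by positivity),
    Fintype.sum_eq_zero_iff_of_nonneg (fun _ => sq_nonneg _),
    Fintype.sum_eq_zero_iff_of_nonneg (fun _ => sq_nonneg _)]
  simp only [funext_iff, Pi.zero_apply, sq_eq_zero_iff, sub_eq_zero, and_assoc]

theorem exists_nonneg_lowerObjective_eq_zero {x : Fin n → ℝ} {b₀ : β}
    (hx : x ∈ basicSet (A b₀) (C b₀)) :
    ∃ y : Fin m → ℝ, (∀ i, 0 ≤ y i) ∧ lowerObjective e A C x y = 0 := by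
  classical
  obtain ⟨hA, hC⟩ := hx
  let s (b : β) : ℝ := if b = b₀ then 1 else 0
  let t (j : Σ b, Fin (k b)) : ℝ := if j.1 = b₀ then (eval x (C j.1 j.2))⁻¹ else 0
  have hs : ∀ b, 0 ≤ s b := fun b => by by_cases hb : b = b₀ <;> simp [s, hb]
  have ht : ∀ j, 0 ≤ t j := by
    rintro ⟨b, l⟩
    by_cases hb : b = b₀
    · subst hb; simpa [t] using (hC l).le
    · simp [t, hb]
  refine ⟨Sum.elim s t ∘ e.symm, fun i => ?_, ?_⟩
  · show 0 ≤ Sum.elim s t (e.symm i)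
    cases e.symm i with
    | inl b => exact hs b
    | inr j => exact ht j
  · simp only [lowerObjective_eq_zero_iff, weight, multiplier, Function.comp_apply,
      Equiv.symm_apply_apply, Sum.elim_inl, Sum.elim_inr]
    refine ⟨fun b => ?_, fun ⟨b, l⟩ => ?_, by simp [s]⟩
    · by_cases hb : b = b₀
      · subst hb; simp [hA]
      · simp [s, hb]
    · by_cases hb : b = b₀
      · subst hb; simp [s, t, (hC l).ne']
      · simp [s, t, hb]

theorem mem_basicSet_of_lowerObjective_eq_zero {x : Fin n → ℝ} {y : Fin m → ℝ}
    (hy : ∀ i, 0 ≤ y i) (hQ : lowerObjective e A C x y = 0) {b : β} (hb : weight e y b ≠ 0) :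
    x ∈ basicSet (A b) (C b) := by
  obtain ⟨hA, hC, -⟩ := (lowerObjective_eq_zero_iff e A C).1 hQ
  refine ⟨(mul_eq_zero.1 (hA b)).resolve_right hb, fun l => ?_⟩
  have hpos : 0 < eval x (C b l) * multiplier e y ⟨b, l⟩ := hC ⟨b, l⟩ ▸ (hy _).lt_of_ne' hb
  exact pos_of_mul_pos_left hpos (hy _)

theorem upperObjective_eq_of_lowerObjective_eq_zero {f : (Fin n → ℝ) → ℝ}
    (hval : ∀ b, ∀ x ∈ basicSet (A b) (C b), f x = eval x (p b)) {x : Fin n → ℝ}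
    {y : Fin m → ℝ} (hy : ∀ i, 0 ≤ y i) (hQ : lowerObjective e A C x y = 0) :
    upperObjective e p x y = f x := by
  have hsum := ((lowerObjective_eq_zero_iff e A C).1 hQ).2.2
  calc upperObjective e p x y = ∑ b, weight e y b * f x := Finset.sum_congr rfl fun b _ => ?_
    _ = f x := by rw [← Finset.sum_mul, hsum, one_mul]
  by_cases hb : weight e y b = 0
  · simp [hb]
  · rw [hval b x (mem_basicSet_of_lowerObjective_eq_zero e A C hy hQ hb)]

theorem valPess_eq_of_exists_mem_basicSet {f : (Fin n → ℝ) → ℝ} {x : Fin n → ℝ}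
    (hx : ∃ b, x ∈ basicSet (A b) (C b))
    (hval : ∀ b, ∀ x ∈ basicSet (A b) (C b), f x = eval x (p b)) :
    valPess (upperObjective e p) (lowerObjective e A C) {y | ∀ i, 0 ≤ y i} x = f x := by
  obtain ⟨b₀, hb₀⟩ := hx
  obtain ⟨y₀, hy₀, hQy₀⟩ := exists_nonneg_lowerObjective_eq_zero e A C hb₀
  have hmem := fun y => mem_argminSet_iff_of_nonneg (Y := {y | ∀ i, 0 ≤ y i}) (y := y)
    (fun y _ => lowerObjective_nonneg e A C x y) hy₀ hQy₀
  refine valPess_eq_of_forall_mem_argminSet ⟨y₀, (hmem y₀).2 ⟨hy₀, hQy₀⟩⟩ fun y hy => ?_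
  obtain ⟨hy, hQ⟩ := (hmem y).1 hy
  exact upperObjective_eq_of_lowerObjective_eq_zero e A C p hval hy hQ

end PiecewiseBilevel

open PiecewiseBilevel in
theorem exists_convex_bilevel_of_basicSet_cover {n : ℕ} {β : Type*} [Fintype β] {k : β → ℕ}
    (A : β → MvPolynomial (Fin n) ℝ) (C : ∀ b, Fin (k b) → MvPolynomial (Fin n) ℝ)
    (p : β → MvPolynomial (Fin n) ℝ) {f : (Fin n → ℝ) → ℝ}
    (hcover : ∀ x, ∃ b, x ∈ basicSet (A b) (C b))
    (hval : ∀ b, ∀ x ∈ basicSet (A b) (C b), f x = eval x (p b)) :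
    ∃ (m : ℕ) (P Q : (Fin n → ℝ) → (Fin m → ℝ) → ℝ) (Y : Set (Fin m → ℝ)),
      IsPolyMap P ∧ IsPolyMap Q ∧ (∀ x, ConvexOn ℝ Set.univ (Q x)) ∧ IsBox Y ∧
      ∀ x, valPess P Q Y x = ((f x : ℝ) : EReal) :=
  let e := Fintype.equivFin (β ⊕ Σ b, Fin (k b))
  ⟨_, upperObjective e p, lowerObjective e A C, {y | ∀ i, 0 ≤ y i},
    isPolyMap_upperObjective e p, isPolyMap_lowerObjective e A C, convexOn_lowerObjective e A C,
    isBox_nonneg _, fun x => valPess_eq_of_exists_mem_basicSet e A C p (hcover x) hval⟩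

theorem IsPiecewisePolynomial.exists_basicSet_cover {n : ℕ} {f : (Fin n → ℝ) → ℝ}
    (hf : IsPiecewisePolynomial f) :
    ∃ (β : Type) (_ : Fintype β) (k : β → ℕ) (A : β → MvPolynomial (Fin n) ℝ)
      (C : ∀ b, Fin (k b) → MvPolynomial (Fin n) ℝ) (p : β → MvPolynomial (Fin n) ℝ),
      (∀ x, ∃ b, x ∈ basicSet (A b) (C b)) ∧
        ∀ b, ∀ x ∈ basicSet (A b) (C b), f x = eval x (p b) := by
  obtain ⟨N, S, p, hS, -, hcover, hval⟩ := hf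
  choose M T hT hST using hS
  choose A k C hTAC using hT
  have hS_eq (i : Fin N) : S i = ⋃ j, basicSet (A i j) (C i j) :=
    (hST i).trans (by simp_rw [hTAC]; rfl)
  refine ⟨Σ i, Fin (M i), inferInstance, fun b => k b.1 b.2, fun b => A b.1 b.2,
    fun b => C b.1 b.2, fun b => p b.1, fun x => ?_, fun ⟨i, j⟩ x hx => ?_⟩
  · obtain ⟨i, hi⟩ := mem_iUnion.1 (hcover.symm ▸ mem_univ x : x ∈ ⋃ i, S i)
    obtain ⟨j, hj⟩ := mem_iUnion.1 (hS_eq i ▸ hi)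
    exact ⟨⟨i, j⟩, hj⟩
  · exact hval i x (hS_eq i ▸ mem_iUnion.2 ⟨j, hx⟩)

/-- every piecewise polynomial function is the pessimistic value function of a
polynomial bilevel problem with convex lower-level objective over a box. -/
theorem piecewise_poly_is_convex_lower_pessimistic_value (n : ℕ) (f : (Fin n → ℝ) → ℝ)
    (hf : IsPiecewisePolynomial f) :
    ∃ (m : ℕ) (P Q : (Fin n → ℝ) → (Fin m → ℝ) → ℝ) (Y : Set (Fin m → ℝ)),
      IsPolyMap P ∧ IsPolyMap Q ∧ (∀ x, ConvexOn ℝ Set.univ (Q x)) ∧ IsBox Y ∧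
      ∀ x, valPess P Q Y x = ((f x : ℝ) : EReal) := by
  obtain ⟨β, _, k, A, C, p, hcover, hval⟩ := hf.exists_basicSet_cover
  exact exists_convex_bilevel_of_basicSet_cover A C p hcover hval
end
end
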